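/- arXiv:2603.07589 — 8 statements merged into one kernel-verified Lean document; each statement's English description precedes it below -/
import Mathlib

section
/- Let f be a polynomial in F[x_0, x_1, ..., x_n] that is reverse-monic with respect to x_0 (i.e., its coefficient of x_0^0 as a polynomial in x_0 equals 1). Then the number of irreducible factors of f, counted with multiplicity, is at most the degree of f in x_0. -/
/-!
Under `MvPolynomial.finSuccEquiv` the statement becomes one about polynomials in `x₀` over the
domain `F[x₁,…,xₙ]`. There every factor divides `f`, so its constant coefficient divides the unit
`f.coeff 0`; a non-unit factor with unit constant coefficient cannot be constant, so it has degree
at least one in `x₀`, and degrees add up in the product.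
-/

namespace Polynomial

variable {R : Type*}

theorem isUnit_coeff_zero_of_dvd [CommSemiring R] {p q : R[X]} (hpq : p ∣ q)
    (hq : IsUnit (q.coeff 0)) : IsUnit (p.coeff 0) := by
  rw [← constantCoeff_apply] at hq ⊢
  exact isUnit_of_dvd_unit (_root_.map_dvd constantCoeff hpq) hq

theorem natDegree_pos_of_isUnit_coeff_zero [Semiring R] {p : R[X]} (hp : ¬IsUnit p)
    (h0 : IsUnit (p.coeff 0)) : 0 < p.natDegree := by
  by_contra! h
  rw [eq_C_of_natDegree_eq_zero (Nat.le_zero.mp h)] at hp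
  exact hp (isUnit_C.mpr h0)

theorem card_le_natDegree_multiset_prod [CommRing R] [IsDomain R] {s : Multiset R[X]}
    (hs : ∀ p ∈ s, 0 < p.natDegree) : Multiset.card s ≤ s.prod.natDegree := by
  have h0 : (0 : R[X]) ∉ s := fun h => (hs 0 h).ne' natDegree_zero
  rw [natDegree_multiset_prod _ h0]
  simpa using Multiset.card_nsmul_le_sum (s := s.map natDegree) (a := 1) (Multiset.forall_mem_map_iff.mpr hs)

theorem card_le_natDegree_of_associated_prod [CommRing R] [IsDomain R] {f : R[X]}
    (hf : IsUnit (f.coeff 0)) {s : Multiset R[X]} (hs : ∀ p ∈ s, ¬IsUnit p)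
    (hprod : Associated s.prod f) : Multiset.card s ≤ f.natDegree := by
  rw [← natDegree_eq_of_degree_eq (degree_eq_degree_of_associated hprod)]
  exact card_le_natDegree_multiset_prod fun p hp => natDegree_pos_of_isUnit_coeff_zero (hs p hp)
    (isUnit_coeff_zero_of_dvd ((Multiset.dvd_prod hp).trans hprod.dvd) hf)

end Polynomial

/-- If `f ∈ F[x₀,...,xₙ]` is reverse-monic with respect to `x₀` (its coefficient of `x₀^0`,
as a polynomial in `x₀`, is `1`), then the number of irreducible factors of `f`,
counted with multiplicity, is at most the degree of `f` in `x₀`. -/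
theorem stmt0 {F : Type*} [Field F] {n : ℕ} (f : MvPolynomial (Fin (n + 1)) F)
    (hrm : ((MvPolynomial.finSuccEquiv F n) f).coeff 0 = 1)
    (s : Multiset (MvPolynomial (Fin (n + 1)) F))
    (hirr : ∀ p ∈ s, Irreducible p)
    (hprod : Associated s.prod f) :
    Multiset.card s ≤ MvPolynomial.degreeOf 0 f := by
  let e := MvPolynomial.finSuccEquiv F n
  rw [← MvPolynomial.natDegree_finSuccEquiv, ← Multiset.card_map e]
  refine Polynomial.card_le_natDegree_of_associated_prod (hrm ▸ isUnit_one) ?_ ?_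
  · simp only [Multiset.mem_map]
    rintro _ ⟨p, hp, rfl⟩
    exact (hirr p hp).not_isUnit ∘ (isUnit_map_iff e p).mp
  · rw [Multiset.prod_hom]
    exact hprod.map e
end

section
/- Let f, g ∈ F[x] be univariate polynomials of positive degree over a field F. Then the dimension of the kernel of the Sylvester matrix of f and g (equivalently, the corank of the Sylvester map (h_1,h_2) ↦ h_1 g + h_2 f from F[x]_{<deg g} × F[x]_{<deg f} to F[x]_{<deg f + deg g}) equals the degree of gcd(f,g). -/
open Polynomial

/-- The Sylvester matrix of two univariate polynomials `f` and `g`: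
a square matrix of size `deg f + deg g`.  The first `deg g` rows are the
coefficient vectors of `x^(deg g - 1 - i) * f` and the remaining `deg f` rows
are the coefficient vectors of `x^(deg f - 1 - i) * g`, with column `j`
corresponding to the monomial `x^(deg f + deg g - 1 - j)`. -/
noncomputable def sylvester {R : Type*} [CommRing R] (f g : R[X]) :
    Matrix (Fin (f.natDegree + g.natDegree)) (Fin (f.natDegree + g.natDegree)) R :=
  Matrix.of fun i j =>
    if (i : ℕ) < g.natDegree then
      (if (j : ℕ) ≤ f.natDegree + (i : ℕ) then f.coeff (f.natDegree + (i : ℕ) - (j : ℕ)) else 0)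
    else
      (if (j : ℕ) ≤ g.natDegree + ((i : ℕ) - g.natDegree) then
        g.coeff (g.natDegree + ((i : ℕ) - g.natDegree) - (j : ℕ)) else 0)

/-- The resultant of two univariate polynomials: the determinant of their Sylvester matrix. -/
noncomputable def resultant {R : Type*} [CommRing R] (f g : R[X]) : R :=
  (_root_.sylvester f g).det

/-!
Write `d = gcd f g`, `f = d f'`, `g = d g'`. A pair `(p, q)` with `deg p < deg f`,
`deg q < deg g` satisfies `f q + g p = 0` iff `f' q = -g' p`; as `f'` and `g'` are coprime this
means `p = f' h` and `q = -g' h`, and the degree bound on `p` is exactly `deg h < deg d`. So the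
kernel of the Sylvester map is isomorphic to the space of polynomials of degree `< deg d`.
The matrix `sylvester f g` is, up to reversing the order of rows and columns, the transpose of
the matrix of the Sylvester map, so its kernel has the same dimension.
-/

open Module
open scoped Matrix

namespace EuclideanDomain

variable {R : Type*} [EuclideanDomain R] [DecidableEq R] {a b : R}

theorem left_div_gcd_ne_zero (ha : a ≠ 0) : a / gcd a b ≠ 0 := by
  have hab : gcd a b ≠ 0 := fun h ↦ ha (EuclideanDomain.gcd_eq_zero_iff.1 h).1
  intro h
  have := EuclideanDomain.mul_div_cancel' hab (gcd_dvd_left a b)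
  rw [h, mul_zero] at this
  exact ha this.symm

theorem isCoprime_div_gcd_div_gcd (hab : gcd a b ≠ 0) :
    IsCoprime (a / gcd a b) (b / gcd a b) := by
  refine ⟨gcdA a b, gcdB a b, mul_left_cancel₀ hab ?_⟩
  calc gcd a b * (gcdA a b * (a / gcd a b) + gcdB a b * (b / gcd a b))
      = gcdA a b * (gcd a b * (a / gcd a b)) + gcdB a b * (gcd a b * (b / gcd a b)) := by ring
    _ = gcd a b * 1 := by
      rw [EuclideanDomain.mul_div_cancel' hab (gcd_dvd_left a b),
        EuclideanDomain.mul_div_cancel' hab (gcd_dvd_right a b), mul_one, gcd_eq_gcd_ab]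
      ring

end EuclideanDomain

theorem Matrix.rank_add_finrank_ker_mulVecLin {K m n : Type*} [Field K] [Fintype n]
    (A : Matrix m n K) : A.rank + finrank K (LinearMap.ker A.mulVecLin) = Fintype.card n := by
  rw [Matrix.rank, LinearMap.finrank_range_add_finrank_ker, finrank_fintype_fun_eq_card]

theorem sylvester_eq_transpose_submatrix_rev {R : Type*} [CommRing R] (f g : R[X]) :
    _root_.sylvester f g = ((Polynomial.sylvester f g f.natDegree g.natDegree).submatrix
      Fin.revPerm Fin.revPerm)ᵀ := by
  ext i j
  obtain ⟨k, rfl⟩ := Fin.rev_surjective i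
  induction k using Fin.addCases <;>
    simp only [_root_.sylvester, Polynomial.sylvester, Matrix.of_apply, Matrix.transpose_apply,
      Matrix.submatrix_apply, Fin.revPerm_apply, Fin.rev_rev, Fin.addCases_left,
      Fin.addCases_right, Fin.val_rev, Fin.val_castAdd, Fin.val_natAdd, Set.mem_Icc] <;>
    split_ifs <;>
    first
    | rfl
    | omega
    | congr 1; omega
    | (apply coeff_eq_zero_of_natDegree_lt; omega)

theorem rank_sylvester_eq_finrank_range_sylvesterMap {F : Type*} [Field F] (f g : F[X]) :
    (_root_.sylvester f g).rank =
      finrank F (LinearMap.range (sylvesterMap f g le_rfl le_rfl)) := by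
  rw [sylvester_eq_transpose_submatrix_rev, Matrix.rank_transpose,
    Matrix.rank_submatrix _ Fin.revPerm Fin.revPerm, ← toMatrix_sylvesterMap' f g le_rfl le_rfl,
    Matrix.rank_eq_finrank_range_toLin _ (degreeLT.basis F _)
      (((degreeLT.basis F _).prod (degreeLT.basis F _)).reindex finSumFinEquiv),
    Matrix.toLin_toMatrix]

namespace Polynomial

theorem mul_mem_degreeLT_natDegree_add {R : Type*} [Semiring R] {a h : R[X]} {k : ℕ}
    (hh : h ∈ R[X]_k) : a * h ∈ R[X]_(a.natDegree + k) := by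
  rw [mem_degreeLT] at hh ⊢
  push_cast
  calc (a * h).degree ≤ a.degree + h.degree := degree_mul_le a h
    _ ≤ a.natDegree + h.degree := by gcongr; exact degree_le_natDegree
    _ < a.natDegree + k := WithBot.add_lt_add_left WithBot.coe_ne_bot hh

theorem mul_mem_degreeLT_natDegree_add_iff {R : Type*} [Semiring R] [NoZeroDivisors R]
    {a h : R[X]} {k : ℕ} (ha : a ≠ 0) : a * h ∈ R[X]_(a.natDegree + k) ↔ h ∈ R[X]_k := by
  rw [mem_degreeLT, mem_degreeLT, degree_mul, degree_eq_natDegree ha, Nat.cast_add]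
  exact WithBot.add_lt_add_iff_left WithBot.coe_ne_bot

theorem finrank_degreeLT {R : Type*} [Ring R] [StrongRankCondition R] (n : ℕ) :
    finrank R R[X]_n = n := by
  rw [finrank_eq_card_basis (degreeLT.basis R n), Fintype.card_fin]

section Field

variable {F : Type*} [Field F]

theorem natDegree_eq_natDegree_div_add {d f : F[X]} (hdf : d ∣ f) (hf : f ≠ 0) :
    f.natDegree = (f / d).natDegree + d.natDegree := by
  have hd : d ≠ 0 := by rintro rfl; exact hf (zero_dvd_iff.1 hdf)
  have hfd : f / d * d = f := by rw [mul_comm, EuclideanDomain.mul_div_cancel' hd hdf]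
  have hq : f / d ≠ 0 := by rintro hq; rw [hq, zero_mul] at hfd; exact hf hfd.symm
  rw [← natDegree_mul hq hd, hfd]

theorem div_mul_mem_degreeLT_natDegree {d f h : F[X]} (hdf : d ∣ f)
    (hh : h ∈ F[X]_d.natDegree) : f / d * h ∈ F[X]_f.natDegree := by
  rcases eq_or_ne f 0 with rfl | hf
  · simp
  rw [natDegree_eq_natDegree_div_add hdf hf]
  exact mul_mem_degreeLT_natDegree_add hh

variable [DecidableEq F[X]] (f g : F[X])

noncomputable def sylvesterKerParam :
    F[X]_(EuclideanDomain.gcd f g).natDegree →ₗ[F] F[X]_f.natDegree × F[X]_g.natDegree :=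
  ((LinearMap.mulLeft F (f / EuclideanDomain.gcd f g)).restrict fun _ ↦
      div_mul_mem_degreeLT_natDegree (EuclideanDomain.gcd_dvd_left f g)).prod
    (-(LinearMap.mulLeft F (g / EuclideanDomain.gcd f g)).restrict fun _ ↦
      div_mul_mem_degreeLT_natDegree (EuclideanDomain.gcd_dvd_right f g))

variable {f g}

theorem sylvesterKerParam_injective (hf : f ≠ 0) :
    Function.Injective (sylvesterKerParam f g) := by
  rw [← LinearMap.ker_eq_bot, LinearMap.ker_eq_bot']
  intro h hh
  have : f / EuclideanDomain.gcd f g * h = 0 := congrArg (fun x ↦ (x.1 : F[X])) hh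
  exact Subtype.ext ((mul_eq_zero.1 this).resolve_left (EuclideanDomain.left_div_gcd_ne_zero hf))

theorem range_sylvesterKerParam (hf : f ≠ 0) :
    LinearMap.range (sylvesterKerParam f g) = LinearMap.ker (sylvesterMap f g le_rfl le_rfl) := by
  set d := EuclideanDomain.gcd f g
  have hd : d ≠ 0 := fun h ↦ hf (EuclideanDomain.gcd_eq_zero_iff.1 h).1
  have hdf : d * (f / d) = f :=
    EuclideanDomain.mul_div_cancel' hd (EuclideanDomain.gcd_dvd_left f g)
  have hdg : d * (g / d) = g :=
    EuclideanDomain.mul_div_cancel' hd (EuclideanDomain.gcd_dvd_right f g)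
  have hf' : f / d ≠ 0 := EuclideanDomain.left_div_gcd_ne_zero hf
  apply le_antisymm
  · rintro _ ⟨h, rfl⟩
    rw [LinearMap.mem_ker]
    ext1
    change f * -(g / d * h) + g * (f / d * h) = 0
    linear_combination (g / d * h) * hdf - (f / d * h) * hdg
  · rintro ⟨⟨p, hp⟩, ⟨q, hq⟩⟩ hpq
    replace hpq : f * q + g * p = 0 := congrArg Subtype.val hpq
    have hpq' : f / d * q + g / d * p = 0 := by
      refine (mul_eq_zero.1 ?_).resolve_left hd
      linear_combination q * hdf + p * hdg + hpq
    obtain ⟨h, rfl⟩ : f / d ∣ p :=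
      (EuclideanDomain.isCoprime_div_gcd_div_gcd hd).dvd_of_dvd_mul_left
        ⟨-q, by linear_combination hpq'⟩
    obtain rfl : q = -(g / d * h) := by
      have : f / d * (q + g / d * h) = 0 := by linear_combination hpq'
      exact eq_neg_of_add_eq_zero_left ((mul_eq_zero.1 this).resolve_left hf')
    rw [natDegree_eq_natDegree_div_add (EuclideanDomain.gcd_dvd_left f g) hf,
      mul_mem_degreeLT_natDegree_add_iff hf'] at hp
    exact ⟨⟨h, hp⟩, rfl⟩

theorem finrank_ker_sylvesterMap (hf : f ≠ 0) :
    finrank F (LinearMap.ker (sylvesterMap f g le_rfl le_rfl)) =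
      (EuclideanDomain.gcd f g).natDegree := by
  rw [← range_sylvesterKerParam hf,
    LinearMap.finrank_range_of_inj (sylvesterKerParam_injective hf), finrank_degreeLT]

end Field

end Polynomial

open scoped Classical in
theorem stmt5_general {F : Type*} [Field F] (f g : Polynomial F)
    (hf : 0 < f.natDegree) :
    Module.finrank F (LinearMap.ker (Matrix.mulVecLin (sylvester f g))) =
      (EuclideanDomain.gcd f g).natDegree := by
  have hS := Matrix.rank_add_finrank_ker_mulVecLin (_root_.sylvester f g)
  have hL := (sylvesterMap f g le_rfl le_rfl).finrank_range_add_finrank_ker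
  rw [rank_sylvester_eq_finrank_range_sylvesterMap, Fintype.card_fin] at hS
  rw [finrank_prod, finrank_degreeLT, finrank_degreeLT,
    finrank_ker_sylvesterMap (ne_zero_of_natDegree_gt hf)] at hL
  omega

open scoped Classical in
/-- The dimension of the kernel of the Sylvester matrix of `f` and `g`
(the corank of the Sylvester map `(h₁, h₂) ↦ h₁ g + h₂ f`) equals `deg gcd(f, g)`. -/
theorem stmt5 {F : Type*} [Field F] (f g : Polynomial F)
    (hf : 0 < f.natDegree) (hg : 0 < g.natDegree) :
    Module.finrank F (LinearMap.ker (Matrix.mulVecLin (sylvester f g))) =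
      (EuclideanDomain.gcd f g).natDegree :=
  stmt5_general f g hf
end

section
/- Let f divide g in the polynomial ring F[x_1,...,x_n], where g has at most s monomials. Then the number of vertices of the Newton polytope of f is at most the number of vertices of the Newton polytope of g, which in turn is at most s. -/
/-!
Multiplying polynomials adds Newton polytopes: `N(f h) = N(f) + N(h)`, because a vertex of a
Minkowski sum has a unique decomposition into points of the summands, so the coefficient of
the corresponding monomial of `f h` is a single nonzero product. Every vertex `v` of the
polytope `N(f)` is exposed by a linear functional `ℓ`; a vertex `z` of the face of
`N(f) + N(h)` on which `ℓ` is maximal then decomposes as `z = v + b`, and the uniqueness of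
decompositions makes `v ↦ z` injective. Finally, the vertices of `N(g)` are exponent vectors
of monomials of `g`.
-/

/-- The Newton polytope of a multivariate polynomial: the convex hull in `ℝⁿ` of the
exponent vectors of its monomials with nonzero coefficient. -/
noncomputable def newtonPolytope {F : Type*} [Field F] {n : ℕ}
    (f : MvPolynomial (Fin n) F) : Set (Fin n → ℝ) :=
  convexHull ℝ ((fun m : Fin n →₀ ℕ => fun i => (m i : ℝ)) '' (f.support : Set (Fin n →₀ ℕ)))

open Set Pointwise

section MinkowskiSum

variable {𝕜 E : Type*} [Field 𝕜] [LinearOrder 𝕜] [IsStrictOrderedRing 𝕜] [AddCommGroup E]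
  [Module 𝕜 E] {P Q : Set E}

theorem eq_and_eq_of_add_mem_extremePoints_add {a b a' b' : E}
    (hz : a + b ∈ (P + Q).extremePoints 𝕜) (ha : a ∈ P) (hb : b ∈ Q) (ha' : a' ∈ P)
    (hb' : b' ∈ Q) (h : a + b = a' + b') : a = a' ∧ b = b' := by
  -- `a + b` is the midpoint of `a + b'` and `a' + b`
  have hmid : a + b ∈ openSegment 𝕜 (a + b') (a' + b) := by
    refine ⟨1 / 2, 1 / 2, by norm_num, by norm_num, by norm_num, ?_⟩
    calc (1 / 2 : 𝕜) • (a + b') + (1 / 2 : 𝕜) • (a' + b)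
        = (1 / 2 : 𝕜) • ((a' + b') + (a + b)) := by module
      _ = a + b := by rw [← h]; module
  obtain ⟨h₁, h₂⟩ :=
    (mem_extremePoints.1 hz).2 _ (add_mem_add ha hb') _ (add_mem_add ha' hb) hmid
  exact ⟨(add_right_cancel h₂).symm, (add_left_cancel h₁).symm⟩

end MinkowskiSum

section Polytope

variable {E : Type*} [NormedAddCommGroup E] [NormedSpace ℝ E]

theorem Set.Finite.extremePoints_convexHull_subset_exposedPoints {S : Set E} (hS : S.Finite) :
    (convexHull ℝ S).extremePoints ℝ ⊆ (convexHull ℝ S).exposedPoints ℝ := by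
  intro v hv
  have hvS : v ∈ S := extremePoints_convexHull_subset hv
  have hvT : v ∉ convexHull ℝ (S \ {v}) := fun h =>
    ((convex_convexHull ℝ S).mem_extremePoints_iff_mem_sdiff_convexHull_sdiff.1 hv).2
      (convexHull_mono (sdiff_subset_sdiff_left (subset_convexHull ℝ S)) h)
  obtain ⟨ℓ, u, hℓu, huv⟩ := geometric_hahn_banach_closed_point (convex_convexHull ℝ _)
    ((hS.subset sdiff_subset).isClosed_convexHull ℝ) hvT
  refine ⟨hv.1, ℓ, fun y hy => ?_⟩
  rcases (S \ {v}).eq_empty_or_nonempty with hempty | hne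
  · have hSv : S ⊆ {v} := sdiff_eq_empty.1 hempty
    obtain rfl : y = v := by simpa using convexHull_mono hSv hy
    exact ⟨le_rfl, fun _ => rfl⟩
  -- `y` lies on a segment from `v` to a point `a` of the hull on which `ℓ a < ℓ v`
  · rw [← insert_eq_of_mem hvS, ← insert_sdiff_singleton, convexHull_insert hne,
      convexJoin_singleton_left, mem_iUnion₂] at hy
    obtain ⟨a, ha, c, d, hc, hd, hcd, rfl⟩ := hy
    have hℓa : ℓ a < ℓ v := (hℓu a ha).trans huv
    obtain rfl : c = 1 - d := by linarith
    simp only [map_add, map_smul, smul_eq_mul]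
    refine ⟨by nlinarith, fun hle => ?_⟩
    have hd0 : d * (ℓ v - ℓ a) ≤ 0 := by linarith
    obtain rfl : d = 0 := le_antisymm (nonpos_of_mul_nonpos_left hd0 (sub_pos.2 hℓa)) hd
    simp

theorem exists_add_mem_extremePoints_add {P K : Set E} {v : E} (hPK : IsCompact (P + K))
    (hK : K.Nonempty) (hv : v ∈ P.exposedPoints ℝ) :
    ∃ b ∈ K, v + b ∈ (P + K).extremePoints ℝ := by
  obtain ⟨hvP, ℓ, hℓ⟩ := hv
  obtain ⟨b₀, hb₀⟩ := hK
  obtain ⟨z₀, hz₀, hz₀max⟩ :=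
    hPK.exists_isMaxOn ⟨v + b₀, add_mem_add hvP hb₀⟩ ℓ.continuous.continuousOn
  set B := {x ∈ P + K | ∀ y ∈ P + K, ℓ y ≤ ℓ x}
  have hB : IsExposed ℝ (P + K) B := fun _ => ⟨ℓ, rfl⟩
  obtain ⟨z, hzB⟩ := (hB.isCompact hPK).extremePoints_nonempty ⟨z₀, hz₀, hz₀max⟩
  obtain ⟨a, ha, b, hb, rfl⟩ := hzB.1.1
  have hmax : ℓ (v + b) ≤ ℓ (a + b) := hzB.1.2 _ (add_mem_add hvP hb)
  rw [map_add, map_add, add_le_add_iff_right] at hmax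
  obtain rfl : a = v := (hℓ a ha).2 hmax
  exact ⟨b, hb, hB.isExtreme.extremePoints_subset_extremePoints hzB⟩

theorem ncard_extremePoints_le_ncard_extremePoints_add {P K : Set E} (hPK : IsCompact (P + K))
    (hK : K.Nonempty) (hP : P.extremePoints ℝ ⊆ P.exposedPoints ℝ)
    (hfin : ((P + K).extremePoints ℝ).Finite) :
    (P.extremePoints ℝ).ncard ≤ ((P + K).extremePoints ℝ).ncard := by
  have hdecomp : ∀ v ∈ P.extremePoints ℝ, ∃ b ∈ K, v + b ∈ (P + K).extremePoints ℝ :=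
    fun v hv => exists_add_mem_extremePoints_add hPK hK (hP hv)
  choose! b hb hvb using hdecomp
  refine ncard_le_ncard_of_injOn (fun v => v + b v) hvb (fun v hv w hw h => ?_) hfin
  exact (eq_and_eq_of_add_mem_extremePoints_add (hvb v hv) hv.1 (hb v hv) hw.1 (hb w hw) h).1

theorem Set.Finite.convexHull_subset_convexHull_of_extremePoints_subset {X Y : Set E}
    (hX : X.Finite) (hY : Y.Finite) (h : (convexHull ℝ X).extremePoints ℝ ⊆ Y) :
    convexHull ℝ X ⊆ convexHull ℝ Y :=
  calc convexHull ℝ X = closure (convexHull ℝ ((convexHull ℝ X).extremePoints ℝ)) :=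
        (closure_convexHull_extremePoints (hX.isCompact_convexHull ℝ) (convex_convexHull ℝ X)).symm
    _ ⊆ closure (convexHull ℝ Y) := closure_mono (convexHull_mono h)
    _ = convexHull ℝ Y := (hY.isClosed_convexHull ℝ).closure_eq

end Polytope

section NewtonPolytope

variable {F : Type*} [Field F] {n : ℕ}

noncomputable def exponentVector (n : ℕ) : (Fin n →₀ ℕ) →+ (Fin n → ℝ) :=
  AddMonoidHom.pi fun i => (Nat.castAddMonoidHom ℝ).comp (Finsupp.applyAddHom i)

theorem exponentVector_injective : Function.Injective (exponentVector n) :=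
  fun _ _ h => Finsupp.ext fun i => Nat.cast_injective (congrFun h i)

theorem newtonPolytope_eq_convexHull (f : MvPolynomial (Fin n) F) :
    newtonPolytope f = convexHull ℝ (exponentVector n '' f.support) :=
  rfl

theorem finite_exponentVector_image_support (f : MvPolynomial (Fin n) F) :
    (exponentVector n '' f.support).Finite :=
  f.support.finite_toSet.image _

theorem extremePoints_newtonPolytope_subset (f : MvPolynomial (Fin n) F) :
    (newtonPolytope f).extremePoints ℝ ⊆ exponentVector n '' f.support :=
  extremePoints_convexHull_subset

theorem ncard_extremePoints_newtonPolytope_le (f : MvPolynomial (Fin n) F) :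
    ((newtonPolytope f).extremePoints ℝ).ncard ≤ f.support.card :=
  calc ((newtonPolytope f).extremePoints ℝ).ncard
      ≤ (exponentVector n '' f.support).ncard :=
        ncard_le_ncard (extremePoints_newtonPolytope_subset f)
          (finite_exponentVector_image_support f)
    _ ≤ (f.support : Set (Fin n →₀ ℕ)).ncard := ncard_image_le f.support.finite_toSet
    _ = f.support.card := ncard_coe_finset _

theorem exponentVector_mem_newtonPolytope {f : MvPolynomial (Fin n) F} {α : Fin n →₀ ℕ}
    (hα : α ∈ f.support) : exponentVector n α ∈ newtonPolytope f :=
  subset_convexHull ℝ _ (mem_image_of_mem _ hα)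

theorem newtonPolytope_nonempty {f : MvPolynomial (Fin n) F} (hf : f ≠ 0) :
    (newtonPolytope f).Nonempty :=
  let ⟨_, hα⟩ := MvPolynomial.support_nonempty.2 hf
  ⟨_, exponentVector_mem_newtonPolytope hα⟩

theorem isCompact_newtonPolytope (f : MvPolynomial (Fin n) F) : IsCompact (newtonPolytope f) :=
  (finite_exponentVector_image_support f).isCompact_convexHull ℝ

-- At a vertex of `N(f) + N(h)` only one term of the product formula survives.
theorem coeff_mul_eq_of_mem_extremePoints {f h : MvPolynomial (Fin n) F} {α β : Fin n →₀ ℕ}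
    (hα : α ∈ f.support) (hβ : β ∈ h.support)
    (hz : exponentVector n (α + β) ∈ (newtonPolytope f + newtonPolytope h).extremePoints ℝ) :
    (f * h).coeff (α + β) = f.coeff α * h.coeff β := by
  rw [MvPolynomial.coeff_mul]
  refine Finset.sum_eq_single (α, β) (fun pq hpq hne => ?_)
    fun hnot => (hnot (Finset.HasAntidiagonal.mem_antidiagonal.2 (rfl : α + β = α + β))).elim
  by_contra hpq0
  have hp : pq.1 ∈ f.support := MvPolynomial.mem_support_iff.2 (left_ne_zero_of_mul hpq0)
  have hq : pq.2 ∈ h.support := MvPolynomial.mem_support_iff.2 (right_ne_zero_of_mul hpq0)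
  rw [map_add] at hz
  obtain ⟨h₁, h₂⟩ := eq_and_eq_of_add_mem_extremePoints_add hz
    (exponentVector_mem_newtonPolytope hα) (exponentVector_mem_newtonPolytope hβ)
    (exponentVector_mem_newtonPolytope hp) (exponentVector_mem_newtonPolytope hq)
    (by rw [← map_add, ← map_add, Finset.HasAntidiagonal.mem_antidiagonal.1 hpq])
  exact hne (Prod.ext (exponentVector_injective h₁).symm (exponentVector_injective h₂).symm)

theorem newtonPolytope_mul (f h : MvPolynomial (Fin n) F) :
    newtonPolytope (f * h) = newtonPolytope f + newtonPolytope h := by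
  have hadd : newtonPolytope f + newtonPolytope h =
      convexHull ℝ (exponentVector n '' f.support + exponentVector n '' h.support) :=
    (convexHull_add _ _).symm
  rw [hadd, newtonPolytope_eq_convexHull]
  apply subset_antisymm
  · refine convexHull_mono ?_
    rintro _ ⟨γ, hγ, rfl⟩
    obtain ⟨α, hα, β, hβ, rfl⟩ := Finset.mem_add.1 (MvPolynomial.support_mul f h hγ)
    exact ⟨_, mem_image_of_mem _ hα, _, mem_image_of_mem _ hβ, (map_add _ α β).symm⟩
  · refine ((finite_exponentVector_image_support f).add
      (finite_exponentVector_image_support h)).convexHull_subset_convexHull_of_extremePoints_subset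
      (finite_exponentVector_image_support _) fun z hz => ?_
    obtain ⟨_, ⟨α, hα, rfl⟩, _, ⟨β, hβ, rfl⟩, rfl⟩ :=
      Set.mem_add.1 (extremePoints_convexHull_subset hz)
    rw [← map_add (exponentVector n) α β] at hz ⊢
    rw [← hadd] at hz
    refine mem_image_of_mem _ ((MvPolynomial.mem_support_iff (p := f * h)).2 ?_)
    rw [coeff_mul_eq_of_mem_extremePoints hα hβ hz]
    exact mul_ne_zero (MvPolynomial.mem_support_iff.1 hα) (MvPolynomial.mem_support_iff.1 hβ)

end NewtonPolytope

/-- If `f ∣ g` and `g` has at most `s` monomials, then the number of vertices (extreme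
points) of the Newton polytope of `f` is at most that of `g`, which is at most `s`. -/
theorem stmt9 {F : Type*} [Field F] {n s : ℕ} (f g : MvPolynomial (Fin n) F)
    (hg : g ≠ 0) (hdvd : f ∣ g) (hs : g.support.card ≤ s) :
    (Set.extremePoints ℝ (newtonPolytope f)).ncard
        ≤ (Set.extremePoints ℝ (newtonPolytope g)).ncard ∧
    (Set.extremePoints ℝ (newtonPolytope g)).ncard ≤ s := by
  refine ⟨?_, (ncard_extremePoints_newtonPolytope_le g).trans hs⟩
  obtain ⟨h, rfl⟩ := hdvd
  have hfin : ((newtonPolytope (f * h)).extremePoints ℝ).Finite :=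
    (finite_exponentVector_image_support _).subset (extremePoints_newtonPolytope_subset _)
  rw [newtonPolytope_mul] at hfin ⊢
  exact ncard_extremePoints_le_ncard_extremePoints_add
    ((isCompact_newtonPolytope f).add (isCompact_newtonPolytope h))
    (newtonPolytope_nonempty (right_ne_zero_of_mul hg))
    (finite_exponentVector_image_support f).extremePoints_convexHull_subset_exposedPoints hfin
end

section
/- Let f ∈ F[x_1,...,x_n] be a nonzero s-sparse polynomial (at most s monomials) with individual degree at most d in each variable, and suppose f is not divisible by any variable x_i. Then the number of irreducible non-constant factors of f, counted with multiplicity, is at most d·log₂(s). -/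
/-!
Induct on `s`. Some irreducible factor `p₀` involves a variable `X i`; view `f` as a polynomial
in `X i` over the remaining variables. The factors involving `X i` number at most
`deg_{X i} f ≤ d`. Since `p₀` is a prime of positive degree in `X i` and not associated to `X i`,
`f` is not a monomial in `X i`: it has two nonzero coefficients, whose monomial supports are
disjoint, so one of them, `g`, has at most `s / 2` terms. The factors not involving `X i` are
constants in `X i`, so they divide every coefficient, in particular `g`, and by induction there
are at most `d · log₂ (s / 2) = d · log₂ s - d` of them.
-/

open Finset

namespace Polynomial

theorem one_lt_card_support_of_prime_dvd {R : Type*} [CommRing R] [IsDomain R] {p q : R[X]}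
    (hp : Prime p) (hdeg : 0 < p.natDegree) (hX : ¬ Associated p X) (hq : q ≠ 0) (hpq : p ∣ q) :
    1 < #q.support := by
  by_contra! h
  rw [← C_mul_X_pow_eq_self h] at hpq
  rcases hp.dvd_or_dvd hpq with hC | hXpow
  · have := natDegree_le_of_dvd hC (C_ne_zero.mpr (leadingCoeff_ne_zero.mpr hq))
    rw [natDegree_C] at this
    omega
  · exact hX (hp.irreducible.associated_of_dvd irreducible_X (hp.dvd_of_dvd_pow hXpow))

end Polynomial

theorem Real.logb_add_one_le_of_mul_le {b t s : ℝ} (hb : 1 < b) (ht : 0 < t) (hts : b * t ≤ s) :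
    Real.logb b t + 1 ≤ Real.logb b s := by
  calc Real.logb b t + 1 = Real.logb b (b * t) := by
        rw [Real.logb_mul (by positivity) ht.ne', Real.logb_self_eq_one hb, add_comm]
    _ ≤ Real.logb b s := Real.logb_le_logb_of_le hb (by positivity) hts

namespace MvPolynomial

variable {R σ : Type*}

section CommSemiring

variable [CommSemiring R]

theorem degreeOf_coeff_optionEquivLeft_le (p : MvPolynomial (Option σ) R) (j : σ) (k : ℕ) :
    degreeOf j ((optionEquivLeft R σ p).coeff k) ≤ degreeOf (some j) p := by
  rw [degreeOf_le_iff]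
  intro m hm
  rw [mem_support_coeff_optionEquivLeft R] at hm
  simpa [Finsupp.optionElim_apply_some] using monomial_le_degreeOf (some j) hm

theorem card_support_coeff_optionEquivLeft_add_le (p : MvPolynomial (Option σ) R) {k l : ℕ}
    (hkl : k ≠ l) :
    #((optionEquivLeft R σ p).coeff k).support + #((optionEquivLeft R σ p).coeff l).support ≤
      #p.support := by
  classical
  have hinj (k : ℕ) : Function.Injective (Finsupp.optionElim k : (σ →₀ ℕ) → _) := fun a b h => by
    simpa [Finsupp.some_optionElim] using congrArg Finsupp.some h
  have hsub (k : ℕ) :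
      ((optionEquivLeft R σ p).coeff k).support.image (Finsupp.optionElim k) ⊆ p.support := by
    rintro _ hm
    obtain ⟨a, ha, rfl⟩ := mem_image.mp hm
    exact (mem_support_coeff_optionEquivLeft R).mp ha
  have hdisj : Disjoint (((optionEquivLeft R σ p).coeff k).support.image (Finsupp.optionElim k))
      (((optionEquivLeft R σ p).coeff l).support.image (Finsupp.optionElim l)) := by
    simp only [Finset.disjoint_left, Finset.mem_image]
    rintro _ ⟨a, -, rfl⟩ ⟨b, -, h⟩
    exact hkl (by simpa [Finsupp.optionElim_apply_none] using (congrArg (· none) h).symm)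
  rw [← card_image_of_injective _ (hinj k), ← card_image_of_injective _ (hinj l),
    ← card_union_of_disjoint hdisj]
  exact card_le_card (union_subset (hsub k) (hsub l))

theorem card_support_rename_of_injective {τ : Type*} {f : σ → τ} (hf : Function.Injective f)
    (p : MvPolynomial σ R) : #(rename f p).support = #p.support := by
  classical
  rw [support_rename_of_injective hf, card_image_of_injective _ (Finsupp.mapDomain_injective hf)]

section polynomialIn

variable [DecidableEq σ]

noncomputable def polynomialIn (i : σ) :
    MvPolynomial σ R ≃ₐ[R] Polynomial (MvPolynomial {j // j ≠ i} R) :=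
  (renameEquiv R (Equiv.optionSubtypeNe i).symm).trans (optionEquivLeft R _)

variable (i : σ)

theorem polynomialIn_apply (p : MvPolynomial σ R) :
    polynomialIn i p = optionEquivLeft R _ (rename (Equiv.optionSubtypeNe i).symm p) := rfl

@[simp]
theorem polynomialIn_X_self : polynomialIn i (X i : MvPolynomial σ R) = Polynomial.X := by
  simp [polynomialIn_apply]

theorem polynomialIn_X_of_ne {j : σ} (h : j ≠ i) :
    polynomialIn i (X j : MvPolynomial σ R) = Polynomial.C (X ⟨j, h⟩) := by
  simp [polynomialIn_apply, Equiv.optionSubtypeNe_symm_of_ne h]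

@[simp]
theorem natDegree_polynomialIn (p : MvPolynomial σ R) :
    (polynomialIn i p).natDegree = degreeOf i p :=
  (degreeOf_eq_natDegree i p).symm

theorem degreeOf_coeff_polynomialIn_le (p : MvPolynomial σ R) (j : {j // j ≠ i}) (k : ℕ) :
    degreeOf j ((polynomialIn i p).coeff k) ≤ degreeOf j.1 p := by
  rw [polynomialIn_apply]
  refine (degreeOf_coeff_optionEquivLeft_le _ j k).trans_eq ?_
  rw [← Equiv.optionSubtypeNe_symm_of_ne j.2,
    degreeOf_rename_of_injective (Equiv.optionSubtypeNe i).symm.injective]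

theorem card_support_coeff_polynomialIn_add_le (p : MvPolynomial σ R) {k l : ℕ} (hkl : k ≠ l) :
    #((polynomialIn i p).coeff k).support + #((polynomialIn i p).coeff l).support ≤
      #p.support :=
  (card_support_coeff_optionEquivLeft_add_le _ hkl).trans_eq
    (card_support_rename_of_injective (Equiv.optionSubtypeNe i).symm.injective p)

theorem polynomialIn_eq_C_of_degreeOf_eq_zero {p : MvPolynomial σ R} (h : degreeOf i p = 0) :
    polynomialIn i p = Polynomial.C ((polynomialIn i p).coeff 0) :=
  Polynomial.eq_C_of_natDegree_eq_zero (by rw [natDegree_polynomialIn, h])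

theorem polynomialIn_multiset_prod_eq_C {m : Multiset (MvPolynomial σ R)}
    (h : ∀ p ∈ m, degreeOf i p = 0) :
    polynomialIn i m.prod = Polynomial.C (m.map fun p => (polynomialIn i p).coeff 0).prod := by
  rw [map_multiset_prod, map_multiset_prod, Multiset.map_map]
  exact congrArg _ <|
    Multiset.map_congr rfl fun p hp => polynomialIn_eq_C_of_degreeOf_eq_zero i (h p hp)

theorem exists_coeff_polynomialIn_ne_zero_and_two_mul_card_support_le {p : MvPolynomial σ R}
    (hp : 1 < #(polynomialIn i p).support) :
    ∃ k, (polynomialIn i p).coeff k ≠ 0 ∧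
      2 * #((polynomialIn i p).coeff k).support ≤ #p.support := by
  obtain ⟨k, hk, l, hl, hkl⟩ := one_lt_card.mp hp
  have := card_support_coeff_polynomialIn_add_le i p hkl
  rcases le_total #((polynomialIn i p).coeff k).support #((polynomialIn i p).coeff l).support with
    h | h
  · exact ⟨k, Polynomial.mem_support_iff.mp hk, by omega⟩
  · exact ⟨l, Polynomial.mem_support_iff.mp hl, by omega⟩

end polynomialIn

variable [NoZeroDivisors R] (i : σ)

theorem degreeOf_le_of_dvd {p q : MvPolynomial σ R} (h : p ∣ q) (hq : q ≠ 0) :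
    degreeOf i p ≤ degreeOf i q := by
  obtain ⟨r, rfl⟩ := h
  rw [degreeOf_mul_eq (left_ne_zero_of_mul hq) (right_ne_zero_of_mul hq)]
  omega

theorem card_filter_degreeOf_ne_zero_le [Nontrivial R] {m : Multiset (MvPolynomial σ R)}
    (hm : (0 : MvPolynomial σ R) ∉ m) :
    Multiset.card (m.filter (degreeOf i · ≠ 0)) ≤ degreeOf i m.prod := by
  induction m using Multiset.induction with
  | empty => simp
  | cons a t ih =>
    rw [Multiset.mem_cons, not_or] at hm
    rw [Multiset.prod_cons, degreeOf_mul_eq (Ne.symm hm.1) (Multiset.prod_ne_zero hm.2),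
      Multiset.filter_cons]
    have := ih hm.2
    split_ifs <;>
      simp only [Multiset.card_add, Multiset.card_singleton, Multiset.card_zero] <;> omega

end CommSemiring

section CommRing

variable [CommRing R] [DecidableEq σ] (i : σ)

theorem irreducible_coeff_zero_polynomialIn {p : MvPolynomial σ R} (hp : Irreducible p)
    (h : degreeOf i p = 0) : Irreducible ((polynomialIn i p).coeff 0) := by
  have := hp.map (polynomialIn i)
  rw [polynomialIn_eq_C_of_degreeOf_eq_zero i h] at this
  exact this.of_map

theorem not_associated_coeff_zero_polynomialIn_X {p : MvPolynomial σ R}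
    (hp : ∀ j, ¬ Associated p (X j)) (h : degreeOf i p = 0) (j : {j // j ≠ i}) :
    ¬ Associated ((polynomialIn i p).coeff 0) (X j) := by
  intro hj
  have := hj.map Polynomial.C
  rw [← polynomialIn_eq_C_of_degreeOf_eq_zero i h, ← polynomialIn_X_of_ne i j.2] at this
  exact hp j (by simpa using this.map (polynomialIn i).symm)

end CommRing

section Field

variable {F : Type*} [Field F]

theorem exists_degreeOf_ne_zero_of_irreducible {p : MvPolynomial σ F} (hp : Irreducible p) :
    ∃ i, degreeOf i p ≠ 0 := by
  by_contra! h
  have hvars : p.vars = ∅ :=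
    eq_empty_of_forall_notMem fun i hi => mem_vars_iff_degreeOf_ne_zero.mp hi (h i)
  rw [vars_eq_empty_iff_eq_C.mp hvars] at hp
  have hc := hp.of_map (f := C)
  exact hc.not_isUnit (isUnit_iff_ne_zero.mpr hc.ne_zero)

variable [DecidableEq σ] (i : σ)

theorem one_lt_card_support_polynomialIn_of_dvd {p f : MvPolynomial σ F} (hp : Irreducible p)
    (hpi : degreeOf i p ≠ 0) (hpX : ¬ Associated p (X i)) (hf : f ≠ 0) (hpf : p ∣ f) :
    1 < #(polynomialIn i f).support := by
  refine Polynomial.one_lt_card_support_of_prime_dvd (hp.map (polynomialIn i)).prime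
    (by simpa using Nat.pos_of_ne_zero hpi) ?_ (by simpa using hf) (map_dvd _ hpf)
  rw [← polynomialIn_X_self i]
  exact fun h => hpX (by simpa only [AlgEquiv.symm_apply_apply] using h.map (polynomialIn i).symm)

theorem card_le_mul_logb_of_prod_dvd {d : ℕ} (s : ℕ) {f : MvPolynomial σ F} (hf : f ≠ 0)
    (hs : #f.support ≤ s) (hd : ∀ i, degreeOf i f ≤ d) {m : Multiset (MvPolynomial σ F)}
    (hirr : ∀ p ∈ m, Irreducible p) (hX : ∀ p ∈ m, ∀ j, ¬ Associated p (X j))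
    (hm : m.prod ∣ f) : (Multiset.card m : ℝ) ≤ d * Real.logb 2 s := by
  classical
  induction s using Nat.strong_induction_on generalizing σ with
  | _ s ih =>
  have hs1 : 1 ≤ s := (card_pos.mpr (support_nonempty.mpr hf)).trans_le hs
  rcases m.empty_or_exists_mem with rfl | ⟨p₀, hp₀⟩
  · simpa using mul_nonneg d.cast_nonneg (Real.logb_nonneg one_lt_two (by exact_mod_cast hs1))
  obtain ⟨i, hi⟩ := exists_degreeOf_ne_zero_of_irreducible (hirr p₀ hp₀)
  set mA := m.filter (degreeOf i · = 0)
  set M := mA.map fun p => (polynomialIn i p).coeff 0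
  have hmA (p) (hp : p ∈ mA) : p ∈ m ∧ degreeOf i p = 0 := Multiset.mem_filter.mp hp
  have hB : (Multiset.card (m.filter (degreeOf i · ≠ 0)) : ℝ) ≤ d := by
    exact_mod_cast (card_filter_degreeOf_ne_zero_le i fun h0 => (hirr 0 h0).ne_zero rfl).trans
      ((degreeOf_le_of_dvd i hm hf).trans (hd i))
  obtain ⟨k, hk0, hks⟩ := exists_coeff_polynomialIn_ne_zero_and_two_mul_card_support_le i <|
    one_lt_card_support_polynomialIn_of_dvd i (hirr p₀ hp₀) hi (hX p₀ hp₀ i) hf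
      ((Multiset.dvd_prod hp₀).trans hm)
  have hMk : M.prod ∣ (polynomialIn i f).coeff k := by
    refine (Polynomial.C_dvd_iff_dvd_coeff _ _).mp ?_ k
    rw [← polynomialIn_multiset_prod_eq_C i fun p hp => (hmA p hp).2]
    exact map_dvd _ ((Multiset.prod_dvd_prod_of_le (Multiset.filter_le _ m)).trans hm)
  have hM := ih _ (by omega) hk0 le_rfl
    (fun j => (degreeOf_coeff_polynomialIn_le i f j k).trans (hd j))
    (Multiset.forall_mem_map_iff.mpr fun p hp =>
      irreducible_coeff_zero_polynomialIn i (hirr p (hmA p hp).1) (hmA p hp).2)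
    (Multiset.forall_mem_map_iff.mpr fun p hp =>
      not_associated_coeff_zero_polynomialIn_X i (hX p (hmA p hp).1) (hmA p hp).2) hMk
  have hlog : Real.logb 2 #((polynomialIn i f).coeff k).support + 1 ≤ Real.logb 2 s :=
    Real.logb_add_one_le_of_mul_le one_lt_two (by simpa [card_pos, support_nonempty] using hk0)
      (by exact_mod_cast hks.trans hs)
  have hcard :
      Multiset.card m = Multiset.card M + Multiset.card (m.filter (degreeOf i · ≠ 0)) := by
    rw [Multiset.card_map, ← Multiset.card_add, Multiset.filter_add_not]
  rw [hcard, Nat.cast_add]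
  linarith [mul_le_mul_of_nonneg_left hlog d.cast_nonneg]

end Field

end MvPolynomial

/-- If `f` is a nonzero `s`-sparse polynomial of individual degree at most `d`,
not divisible by any variable, then the number of irreducible factors of `f`,
counted with multiplicity, is at most `d · log₂ s`. -/
theorem stmt10 {F : Type*} [Field F] {n s d : ℕ} (f : MvPolynomial (Fin n) F)
    (hf : f ≠ 0) (hs : f.support.card ≤ s) (hd : ∀ i, MvPolynomial.degreeOf i f ≤ d)
    (hmon : ∀ i, ¬ (MvPolynomial.X i ∣ f))
    (m : Multiset (MvPolynomial (Fin n) F)) (hirr : ∀ p ∈ m, Irreducible p)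
    (hprod : Associated m.prod f) :
    (Multiset.card m : ℝ) ≤ d * Real.logb 2 s := by
  refine MvPolynomial.card_le_mul_logb_of_prod_dvd s hf hs hd hirr ?_ hprod.dvd
  intro p hp j hpX
  exact hmon j ((hpX.symm.dvd.trans (Multiset.dvd_prod hp)).trans hprod.dvd)
end

section
/- Let P be a set of polynomials in F[x_1,...,x_n]. Then every f ∈ P can be written as a product of primitive divisors for P, and this factorization is unique up to reordering and multiplication by units. -/
/-!
Every prime of `f ∈ P` lies in a primitive divisor `g ∣ f`: among the power divisors over that
prime, take one with minimal cofactor in `f`. As `f = g ^ k * r` with `r` coprime to `g`, such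
powers can be peeled off `f` one at a time; uniqueness follows by matching factors along common
primes, once two primitive divisors `g`, `h` of `f` sharing a prime `q` are known to be associated.

For that, comparing multiplicities of `q` shows: if `f = g ^ a * _ = h ^ b * _` with coprime
cofactors, then in every element of `P` the exponents of `g` and `h` stay in the ratio `a : b`.
Hence `x = g ^ (a / gcd a b)` and `y = h ^ (b / gcd a b)` occur with equal exponents everywhere.
Writing `x = c * x'`, `y = c * y'` with `x'`, `y'` coprime, `x * y'` is again a power divisor for
`P` and a common multiple of `g` and `h`, so maximality forces `g ~ x * y' ~ h`.
-/

/-- Two multivariate polynomials have no common non-unit divisor (gcd-coprimality). -/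
def RelPrime {F : Type*} [Field F] {n : ℕ} (a b : MvPolynomial (Fin n) F) : Prop :=
  ∀ c : MvPolynomial (Fin n) F, c ∣ a → c ∣ b → IsUnit c

/-- Condition (1) of being a primitive divisor for a class `P`: every `f ∈ P` can be
written as `g ^ k * g̃` with `g̃` coprime to `g`. -/
def IsPowerDivisorOfAll {F : Type*} [Field F] {n : ℕ}
    (P : Set (MvPolynomial (Fin n) F)) (g : MvPolynomial (Fin n) F) : Prop :=
  ∀ f ∈ P, ∃ (k : ℕ) (r : MvPolynomial (Fin n) F), RelPrime g r ∧ f = g ^ k * r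

/-- `g` is a primitive divisor for the class `P`: every `f ∈ P` is `g ^ k` times a
polynomial coprime to `g`, and no non-scalar polynomial multiple of `g` has this property. -/
def IsPrimitiveDivisor {F : Type*} [Field F] {n : ℕ}
    (P : Set (MvPolynomial (Fin n) F)) (g : MvPolynomial (Fin n) F) : Prop :=
  IsPowerDivisorOfAll P g ∧
    ∀ h : MvPolynomial (Fin n) F, g ∣ h → ¬ Associated g h → ¬ IsPowerDivisorOfAll P h

open UniqueFactorizationMonoid

theorem Nat.exists_eq_div_gcd_mul_of_mul_eq_mul {a b a' b' : ℕ} (ha : a ≠ 0)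
    (h : a * b' = a' * b) : ∃ s, a' = a / a.gcd b * s ∧ b' = b / a.gcd b * s := by
  have hd : 0 < a.gcd b := Nat.gcd_pos_of_pos_left b (Nat.pos_of_ne_zero ha)
  have ha₁ : 0 < a / a.gcd b := Nat.div_pos (Nat.gcd_le_left b (Nat.pos_of_ne_zero ha)) hd
  have hred : a / a.gcd b * b' = a' * (b / a.gcd b) := by
    apply Nat.eq_of_mul_eq_mul_left hd
    rw [← mul_assoc, Nat.mul_div_cancel' (Nat.gcd_dvd_left a b), h, mul_left_comm,
      Nat.mul_div_cancel' (Nat.gcd_dvd_right a b)]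
  obtain ⟨s, rfl⟩ : a / a.gcd b ∣ a' :=
    (Nat.coprime_div_gcd_div_gcd hd).dvd_of_dvd_mul_right ⟨b', hred.symm⟩
  refine ⟨s, rfl, Nat.eq_of_mul_eq_mul_left ha₁ ?_⟩
  rw [hred]
  ring

section CommMonoid

variable {α : Type*} [CommMonoid α]

def IsCoprimePowFactor (g : α) (k : ℕ) (f : α) : Prop :=
  ∃ r, IsRelPrime g r ∧ f = g ^ k * r

def IsPowerDivisorOn (P : Set α) (g : α) : Prop :=
  ∀ f ∈ P, ∃ k, IsCoprimePowFactor g k f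

def IsPrimitiveDivisorOn (P : Set α) (g : α) : Prop :=
  IsPowerDivisorOn P g ∧ ∀ h, g ∣ h → ¬Associated g h → ¬IsPowerDivisorOn P h

def IsPartialPrimitiveFactorization (P : Set α) (f d : α) (M : Multiset α) : Prop :=
  (∀ g ∈ M, IsPrimitiveDivisorOn P g ∧ ¬IsUnit g) ∧ IsRelPrime d M.prod ∧
    Associated (d * M.prod) f

theorem not_isRelPrime_of_dvd {g h f : α} (hgf : g ∣ f) (hgh : ¬IsRelPrime g h) :
    ¬IsRelPrime g f :=
  fun H => hgh (isRelPrime_self.mp (H.of_dvd_right hgf)).isRelPrime_left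

namespace IsCoprimePowFactor

variable {g f : α} {k : ℕ}

theorem ne_zero_of_not_isRelPrime (h : IsCoprimePowFactor g k f) (hgf : ¬IsRelPrime g f) :
    k ≠ 0 := by
  rintro rfl
  obtain ⟨r, hr, rfl⟩ := h
  rw [pow_zero, one_mul] at hgf
  exact hgf hr

theorem pow_dvd (h : IsCoprimePowFactor g k f) : g ^ k ∣ f := by
  obtain ⟨r, -, rfl⟩ := h
  exact dvd_mul_right _ _

theorem pow [DecompositionMonoid α] {a s : ℕ} (h : IsCoprimePowFactor g (a * s) f) :
    IsCoprimePowFactor (g ^ a) s f := by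
  obtain ⟨r, hr, rfl⟩ := h
  exact ⟨r, hr.pow_left, by rw [pow_mul]⟩

end IsCoprimePowFactor

end CommMonoid

section UniqueFactorizationMonoid

variable {α : Type*} [CommMonoidWithZero α]

theorem Prime.not_isRelPrime {p a b : α} (hp : Prime p) (ha : p ∣ a) (hb : p ∣ b) :
    ¬IsRelPrime a b :=
  fun h => hp.not_isUnit (h ha hb)

variable [UniqueFactorizationMonoid α] {P : Set α}

theorem exists_prime_dvd_of_not_isUnit {a : α} (ha : ¬IsUnit a) (ha0 : a ≠ 0) :
    ∃ p, Prime p ∧ p ∣ a := by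
  obtain ⟨p, hp, hpa⟩ := WfDvdMonoid.exists_irreducible_factor ha ha0
  exact ⟨p, irreducible_iff_prime.mp hp, hpa⟩

namespace IsCoprimePowFactor

variable {g f : α} {k : ℕ}

theorem multiplicity_eq (h : IsCoprimePowFactor g k f) (hf : f ≠ 0) (hg : g ≠ 0) {q : α}
    (hq : Prime q) (hqg : q ∣ g) : multiplicity q f = k * multiplicity q g := by
  obtain ⟨r, hr, rfl⟩ := h
  have hqr : multiplicity q r = 0 :=
    multiplicity_eq_zero.mpr fun hqr => hq.not_isRelPrime hqg hqr hr
  rw [multiplicity_mul hq (.of_prime_left hq hf), hqr, add_zero,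
    (FiniteMultiplicity.of_prime_left hq hg).multiplicity_pow hq]

theorem mul_eq_mul_of_prime_dvd {h f' q : α} {a b a' b' : ℕ} (hq : Prime q) (hqg : q ∣ g)
    (hqh : q ∣ h) (hf : f ≠ 0) (hf' : f' ≠ 0) (hg : g ≠ 0) (hh : h ≠ 0)
    (ha : IsCoprimePowFactor g a f) (hb : IsCoprimePowFactor h b f)
    (ha' : IsCoprimePowFactor g a' f') (hb' : IsCoprimePowFactor h b' f') :
    a * b' = a' * b := by
  have hvg := multiplicity_pos_of_dvd hqg
  have hvh := multiplicity_pos_of_dvd hqh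
  have hf_eq := (ha.multiplicity_eq hf hg hq hqg).symm.trans (hb.multiplicity_eq hf hh hq hqh)
  have hf'_eq :=
    (ha'.multiplicity_eq hf' hg hq hqg).symm.trans (hb'.multiplicity_eq hf' hh hq hqh)
  apply Nat.eq_of_mul_eq_mul_right (Nat.mul_pos hvg hvh)
  calc a * b' * (multiplicity q g * multiplicity q h)
      = (a * multiplicity q g) * (b' * multiplicity q h) := by ring
    _ = (b * multiplicity q h) * (a' * multiplicity q g) := by rw [hf_eq, hf'_eq]
    _ = a' * b * (multiplicity q g * multiplicity q h) := by ring

theorem exists_common_multiple {x y : α} {d : ℕ} (hd : d ≠ 0) (hf : f ≠ 0)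
    (hx : IsCoprimePowFactor x d f) (hy : IsCoprimePowFactor y d f) :
    ∃ m, x ∣ m ∧ y ∣ m ∧ ∀ s f',
      IsCoprimePowFactor x s f' → IsCoprimePowFactor y s f' → IsCoprimePowFactor m s f' := by
  obtain ⟨rx, hrx, hfx⟩ := hx
  obtain ⟨ry, hry, hfy⟩ := hy
  have hx0 : x ≠ 0 := fun h => hf (by rw [hfx, h, zero_pow hd, zero_mul])
  have hy0 : y ≠ 0 := fun h => hf (by rw [hfy, h, zero_pow hd, zero_mul])
  obtain ⟨x', y', c, hx'y', rfl, rfl⟩ := exists_reduced_factors _ hx0 y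
  have hc0 : c ≠ 0 := left_ne_zero_of_mul hy0
  -- cancelling `c ^ d` in `f` puts `y' ^ d` into the cofactor of `x`, so `y'` is coprime to `x`
  have hcancel : x' ^ d * rx = y' ^ d * ry := by
    apply mul_left_cancel₀ (pow_ne_zero d hc0)
    rw [← mul_assoc, ← mul_pow, ← hfx, hfy, mul_pow, mul_assoc]
  have hy'rx : y' ∣ rx :=
    (dvd_pow_self y' hd).trans ((hx'y'.symm.pow.dvd_of_dvd_mul_left) ⟨ry, hcancel⟩)
  have hxy' : IsRelPrime (c * x') y' := hrx.of_dvd_right hy'rx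
  refine ⟨c * x' * y', dvd_mul_right _ _, ?_, ?_⟩
  · exact ⟨x', mul_right_comm c x' y' ▸ rfl⟩
  rintro s f' ⟨rx', hrx', hf'x⟩ ⟨ry', hry', hf'y⟩
  have hxs0 : (c * x') ^ s ≠ 0 := pow_ne_zero s hx0
  have hys0 : (c * y') ^ s ≠ 0 := pow_ne_zero s hy0
  obtain ⟨r, hr⟩ : (c * x') ^ s * y' ^ s ∣ f' :=
    hxy'.pow.mul_dvd ⟨rx', hf'x⟩ ((pow_dvd_pow_of_dvd (dvd_mul_left y' c) s).trans ⟨ry', hf'y⟩)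
  have hrx'_eq : rx' = y' ^ s * r :=
    mul_left_cancel₀ hxs0 (by rw [← hf'x, hr, mul_assoc])
  have hry'_eq : ry' = x' ^ s * r :=
    mul_left_cancel₀ hys0 (by
      rw [← hf'y, hr]
      simp only [mul_pow, mul_comm, mul_left_comm, mul_assoc])
  refine ⟨r, IsRelPrime.mul_left ?_ ?_, by rw [hr, mul_pow (c * x')]⟩
  · exact hrx'.of_dvd_right (hrx'_eq ▸ dvd_mul_left r _)
  · exact (hry'.of_dvd_left (dvd_mul_left y' c)).of_dvd_right (hry'_eq ▸ dvd_mul_left r _)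

end IsCoprimePowFactor

namespace IsPowerDivisorOn

theorem of_prime (h0 : (0 : α) ∉ P) {q : α} (hq : Prime q) : IsPowerDivisorOn P q := by
  intro f hf
  obtain ⟨k, r, hqr, rfl⟩ :=
    WfDvdMonoid.max_power_factor (ne_of_mem_of_not_mem hf h0) hq.irreducible
  exact ⟨k, r, hq.irreducible.isRelPrime_iff_not_dvd.mpr hqr, rfl⟩

theorem exists_common_multiple (h0 : (0 : α) ∉ P) {g h f : α} (hg : IsPowerDivisorOn P g)
    (hh : IsPowerDivisorOn P h) (hf : f ∈ P) (hgf : g ∣ f) (hhf : h ∣ f)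
    (hgh : ¬IsRelPrime g h) : ∃ m, IsPowerDivisorOn P m ∧ g ∣ m ∧ h ∣ m := by
  have hf0 : f ≠ 0 := ne_of_mem_of_not_mem hf h0
  have hg0 : g ≠ 0 := ne_zero_of_dvd_ne_zero hf0 hgf
  have hh0 : h ≠ 0 := ne_zero_of_dvd_ne_zero hf0 hhf
  obtain ⟨q, hqg, hqh, hq⟩ : ∃ q, q ∣ g ∧ q ∣ h ∧ Prime q := by
    simpa [isRelPrime_iff_no_prime_factors hg0] using hgh
  obtain ⟨a, ha⟩ := hg f hf
  obtain ⟨b, hb⟩ := hh f hf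
  have ha0 := ha.ne_zero_of_not_isRelPrime (not_isRelPrime_of_dvd hgf hgh)
  have hb0 := hb.ne_zero_of_not_isRelPrime (not_isRelPrime_of_dvd hhf fun H => hgh H.symm)
  have hd : a.gcd b ≠ 0 := Nat.gcd_ne_zero_left ha0
  have ha₁ : a / a.gcd b ≠ 0 :=
    (Nat.div_ne_zero_iff_of_dvd (Nat.gcd_dvd_left a b)).mpr ⟨ha0, hd⟩
  have hb₁ : b / a.gcd b ≠ 0 :=
    (Nat.div_ne_zero_iff_of_dvd (Nat.gcd_dvd_right a b)).mpr ⟨hb0, hd⟩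
  have hx : IsCoprimePowFactor (g ^ (a / a.gcd b)) (a.gcd b) f :=
    (Nat.div_mul_cancel (Nat.gcd_dvd_left a b) ▸ ha).pow
  have hy : IsCoprimePowFactor (h ^ (b / a.gcd b)) (a.gcd b) f :=
    (Nat.div_mul_cancel (Nat.gcd_dvd_right a b) ▸ hb).pow
  obtain ⟨m, hgm, hhm, hm⟩ := hx.exists_common_multiple hd hf0 hy
  refine ⟨m, fun f' hf' => ?_, (dvd_pow_self g ha₁).trans hgm, (dvd_pow_self h hb₁).trans hhm⟩
  obtain ⟨a', ha'⟩ := hg f' hf'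
  obtain ⟨b', hb'⟩ := hh f' hf'
  obtain ⟨s, rfl, rfl⟩ := Nat.exists_eq_div_gcd_mul_of_mul_eq_mul ha0 <|
    IsCoprimePowFactor.mul_eq_mul_of_prime_dvd hq hqg hqh hf0 (ne_of_mem_of_not_mem hf' h0)
      hg0 hh0 ha hb ha' hb'
  exact ⟨s, hm s f' ha'.pow hb'.pow⟩

end IsPowerDivisorOn

theorem IsPrimitiveDivisorOn.associated_of_not_isRelPrime (h0 : (0 : α) ∉ P) {g h f : α}
    (hg : IsPrimitiveDivisorOn P g) (hh : IsPrimitiveDivisorOn P h) (hf : f ∈ P) (hgf : g ∣ f)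
    (hhf : h ∣ f) (hgh : ¬IsRelPrime g h) : Associated g h := by
  obtain ⟨m, hm, hgm, hhm⟩ := hg.1.exists_common_multiple h0 hh.1 hf hgf hhf hgh
  have hgm' : Associated g m := by_contra fun hn => hg.2 m hgm hn hm
  have hhm' : Associated h m := by_contra fun hn => hh.2 m hhm hn hm
  exact hgm'.trans hhm'.symm

theorem IsPowerDivisorOn.exists_isPrimitiveDivisorOn (h0 : (0 : α) ∉ P) {x f : α}
    (hx : IsPowerDivisorOn P x) (hxu : ¬IsUnit x) (hf : f ∈ P) (hxf : x ∣ f) :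
    ∃ g, IsPrimitiveDivisorOn P g ∧ x ∣ g ∧ g ∣ f := by
  have hf0 : f ≠ 0 := ne_of_mem_of_not_mem hf h0
  have hdvd : ∀ h, IsPowerDivisorOn P h → x ∣ h → h ∣ f := fun h hh hxh => by
    obtain ⟨k, hk⟩ := hh f hf
    have hxf' : ¬IsRelPrime h f := fun H => hxu (H hxh hxf)
    exact (dvd_pow_self h (hk.ne_zero_of_not_isRelPrime hxf')).trans hk.pow_dvd
  -- a power divisor over `x` with the smallest cofactor in `f` is primitive
  obtain ⟨t, ⟨g, hg, hxg, rfl⟩, hmin⟩ := wellFounded_dvdNotUnit.has_min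
    {t | ∃ g, IsPowerDivisorOn P g ∧ x ∣ g ∧ f = g * t} (by
      obtain ⟨t, rfl⟩ := hxf
      exact ⟨t, x, hx, dvd_rfl, rfl⟩)
  refine ⟨g, ⟨hg, fun h hgh hnassoc hh => ?_⟩, hxg, dvd_mul_right g t⟩
  obtain ⟨t', ht'⟩ := hdvd h hh (hxg.trans hgh)
  obtain ⟨e, rfl⟩ := hgh
  refine hmin t' ⟨g * e, hh, hxg.trans (dvd_mul_right g e), ht'⟩
    ⟨right_ne_zero_of_mul (ht' ▸ hf0), e, fun he => hnassoc (associated_mul_unit_right g e he), ?_⟩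
  · rw [mul_comm]
    exact mul_left_cancel₀ (left_ne_zero_of_mul hf0) (by rw [ht', mul_assoc])

namespace IsPartialPrimitiveFactorization

variable {f d : α} {M : Multiset α}

theorem exists_dvdNotUnit (h0 : (0 : α) ∉ P) (hf : f ∈ P)
    (h : IsPartialPrimitiveFactorization P f d M) (hd : ¬IsUnit d) :
    ∃ d' M', DvdNotUnit d' d ∧ IsPartialPrimitiveFactorization P f d' M' := by
  obtain ⟨hM, hdM, hassoc⟩ := h
  have hf0 : f ≠ 0 := ne_of_mem_of_not_mem hf h0
  have hd0 : d ≠ 0 := left_ne_zero_of_mul (hassoc.ne_zero_iff.mpr hf0)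
  have hdf : d ∣ f := (dvd_mul_right d _).trans hassoc.dvd
  have hMf : ∀ h ∈ M, h ∣ f := fun h hh =>
    (Multiset.dvd_prod hh).trans ((dvd_mul_left _ d).trans hassoc.dvd)
  obtain ⟨p, hp, hpd⟩ := exists_prime_dvd_of_not_isUnit hd hd0
  obtain ⟨g, hg, hpg, hgf⟩ := (IsPowerDivisorOn.of_prime h0 hp).exists_isPrimitiveDivisorOn h0
    hp.not_isUnit hf (hpd.trans hdf)
  have hg0 : g ≠ 0 := ne_zero_of_dvd_ne_zero hf0 hgf
  have hgu : ¬IsUnit g := fun hu => hp.not_isUnit (isUnit_of_dvd_unit hpg hu)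
  -- a factor of `M` sharing a prime with `g` would be associated to `g`, so `p` would divide it
  have hgM : IsRelPrime g M.prod :=
    (isRelPrime_iff_no_prime_factors hg0).mpr fun q hqg hqM hq => by
    obtain ⟨h, hhM, hqh⟩ := hq.exists_mem_multiset_dvd hqM
    have hgh := hg.associated_of_not_isRelPrime h0 (hM h hhM).1 hf hgf (hMf h hhM)
      (hq.not_isRelPrime hqg hqh)
    exact hp.not_isRelPrime hpd ((hpg.trans hgh.dvd).trans (Multiset.dvd_prod hhM)) hdM
  obtain ⟨k, hk⟩ := hg.1 f hf
  have hk0 : k ≠ 0 := hk.ne_zero_of_not_isRelPrime (hp.not_isRelPrime hpg (hpd.trans hdf))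
  obtain ⟨r, hgr, hfr⟩ := hk
  obtain ⟨d', rfl⟩ : g ^ k ∣ d :=
    hgM.pow_left.dvd_of_dvd_mul_right ((Dvd.intro r hfr.symm).trans hassoc.symm.dvd)
  have hd'r : d' ∣ r := by
    have : Associated (g ^ k * (d' * M.prod)) (g ^ k * r) := by rwa [← mul_assoc, ← hfr]
    exact (dvd_mul_right d' _).trans (this.of_mul_left (.refl _) (pow_ne_zero k hg0)).dvd
  refine ⟨d', M + Multiset.replicate k g, ⟨right_ne_zero_of_mul hd0, g ^ k, ?_, mul_comm _ _⟩,
    ?_, ?_, ?_⟩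
  · rwa [isUnit_pow_iff hk0]
  · intro h hh
    rcases Multiset.mem_add.mp hh with hh | hh
    · exact hM h hh
    · rw [Multiset.eq_of_mem_replicate hh]
      exact ⟨hg, hgu⟩
  · rw [Multiset.prod_add, Multiset.prod_replicate]
    exact (hdM.of_dvd_left (dvd_mul_left d' _)).mul_right (hgr.of_dvd_right hd'r).symm.pow_right
  · rwa [Multiset.prod_add, Multiset.prod_replicate, mul_comm M.prod, ← mul_assoc,
      mul_comm d']

theorem exists_primitive_factorization (h0 : (0 : α) ∉ P) (hf : f ∈ P)
    (h : IsPartialPrimitiveFactorization P f d M) :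
    ∃ m : Multiset α, (∀ g ∈ m, IsPrimitiveDivisorOn P g ∧ ¬IsUnit g) ∧ Associated m.prod f := by
  induction d using (wellFounded_dvdNotUnit (α := α)).induction generalizing M with
  | h d ih =>
    by_cases hd : IsUnit d
    · exact ⟨M, h.1, (associated_unit_mul_left _ d hd).symm.trans h.2.2⟩
    · obtain ⟨d', M', hd', h'⟩ := h.exists_dvdNotUnit h0 hf hd
      exact ih d' hd' h'

end IsPartialPrimitiveFactorization

theorem exists_primitive_factorization (h0 : (0 : α) ∉ P) {f : α} (hf : f ∈ P) :
    ∃ m : Multiset α, (∀ g ∈ m, IsPrimitiveDivisorOn P g ∧ ¬IsUnit g) ∧ Associated m.prod f :=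
  IsPartialPrimitiveFactorization.exists_primitive_factorization (d := f) (M := 0) h0 hf
    ⟨by simp, by simpa using isRelPrime_one_right, by simp⟩

theorem primitive_factorization_unique (h0 : (0 : α) ∉ P) {f : α} (hf : f ∈ P)
    {m₁ m₂ : Multiset α} (h₁ : ∀ g ∈ m₁, IsPrimitiveDivisorOn P g ∧ ¬IsUnit g)
    (h₂ : ∀ g ∈ m₂, IsPrimitiveDivisorOn P g ∧ ¬IsUnit g) (hm₁ : m₁.prod ∣ f) (hm₂ : m₂.prod ∣ f)
    (h : Associated m₁.prod m₂.prod) : Multiset.Rel Associated m₁ m₂ := by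
  classical
  induction m₁ using Multiset.induction generalizing m₂ with
  | empty =>
    rw [Multiset.prod_zero] at h
    refine Multiset.rel_zero_left.mpr (Multiset.eq_zero_of_forall_notMem fun g hg => ?_)
    exact (h₂ g hg).2
      (isUnit_of_dvd_unit (Multiset.dvd_prod hg) (associated_one_iff_isUnit.mp h.symm))
  | cons g t ih =>
    have hgm₁ : g ∣ (g ::ₘ t).prod := Multiset.dvd_prod (Multiset.mem_cons_self g t)
    obtain ⟨hg, hgu⟩ := h₁ g (Multiset.mem_cons_self g t)
    have hgf : g ∣ f := hgm₁.trans hm₁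
    have hg0 : g ≠ 0 := ne_zero_of_dvd_ne_zero (ne_of_mem_of_not_mem hf h0) hgf
    obtain ⟨p, hp, hpg⟩ := exists_prime_dvd_of_not_isUnit hgu hg0
    obtain ⟨h', hh'm₂, hph'⟩ := hp.exists_mem_multiset_dvd ((hpg.trans hgm₁).trans h.dvd)
    have hgh' : Associated g h' :=
      hg.associated_of_not_isRelPrime h0 (h₂ h' hh'm₂).1 hf hgf
        ((Multiset.dvd_prod hh'm₂).trans hm₂) (hp.not_isRelPrime hpg hph')
    rw [← Multiset.cons_erase hh'm₂] at h h₂ ⊢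
    rw [Multiset.prod_cons, Multiset.prod_cons] at h
    refine .cons hgh' (ih (fun g hg => h₁ g (Multiset.mem_cons_of_mem hg))
      (fun g hg => h₂ g (Multiset.mem_cons_of_mem hg))
      ((Multiset.prod_dvd_prod_of_le (Multiset.le_cons_self t g)).trans hm₁)
      ((Multiset.prod_dvd_prod_of_le (Multiset.erase_le h' m₂)).trans hm₂)
      (h.of_mul_left hgh' hg0))

end UniqueFactorizationMonoid

/-- Every element of a class `P` of nonzero polynomials can be written as a product of
primitive divisors for `P`, uniquely up to reordering and multiplication by units. -/
theorem stmt14 {F : Type*} [Field F] {n : ℕ} (P : Set (MvPolynomial (Fin n) F))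
    (h0 : (0 : MvPolynomial (Fin n) F) ∉ P)
    (f : MvPolynomial (Fin n) F) (hf : f ∈ P) :
    (∃ m : Multiset (MvPolynomial (Fin n) F),
        (∀ p ∈ m, IsPrimitiveDivisor P p ∧ ¬ IsUnit p) ∧ Associated m.prod f) ∧
    (∀ m₁ m₂ : Multiset (MvPolynomial (Fin n) F),
        ((∀ p ∈ m₁, IsPrimitiveDivisor P p ∧ ¬ IsUnit p) ∧ Associated m₁.prod f) →
        ((∀ p ∈ m₂, IsPrimitiveDivisor P p ∧ ¬ IsUnit p) ∧ Associated m₂.prod f) →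
        Multiset.Rel Associated m₁ m₂) :=
  ⟨exists_primitive_factorization h0 hf, fun _ _ ⟨h₁, ha₁⟩ ⟨h₂, ha₂⟩ =>
    primitive_factorization_unique h0 hf h₁ h₂ ha₁.dvd ha₂.dvd (ha₁.trans ha₂.symm)⟩
end

section
/- Let P be a set of polynomials, and let h_1, h_2 be two non-associate primitive divisors for P. Then there exist f_1, f_2 ∈ P such that the 2×2 integer matrix with entries v_{h_1}(f_1), v_{h_1}(f_2) (first row) and v_{h_2}(f_1), v_{h_2}(f_2) (second row) is invertible over the rationals, where v_h(f) denotes the multiplicity of the primitive divisor h in the factorization of f into primitive divisors. -/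
/-!
Write `vᵢ(f)` for the multiplicity of `hᵢ` in `f`. If all `2 × 2` minors of the vectors
`(v₁(f), v₂(f))`, `f ∈ P`, vanish, these vectors lie on one ray `ℕ · (a, b)` with `a, b`
coprime, and neither coordinate vanishes identically on `P`: otherwise `hᵢ²` would also be a
power divisor for `P`. Then `vᵢ(f) = a t, b t` forces `f = lcm (h₁ ^ a) (h₂ ^ b) ^ t * s` with
`s` coprime to the `lcm`, so this `lcm` is a power divisor for `P` and a multiple of both `h₁`
and `h₂`. Primitivity makes it associated to both, contradicting `¬ Associated h₁ h₂`.
-/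

theorem Nat.exists_eq_div_gcd_mul {p q m k : ℕ} (hp : p ≠ 0) (h : p * k = m * q) :
    ∃ t, m = p / p.gcd q * t ∧ k = q / p.gcd q * t := by
  have ha : 0 < p / p.gcd q := Nat.div_gcd_pos_of_pos_left q (Nat.pos_of_ne_zero hp)
  have hpa := Nat.mul_div_cancel' (Nat.gcd_dvd_left p q)
  have hqb := Nat.mul_div_cancel' (Nat.gcd_dvd_right p q)
  set d := p.gcd q
  have hd : 0 < d := Nat.gcd_pos_of_pos_left q (Nat.pos_of_ne_zero hp)
  set a := p / d
  set b := q / d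
  have hab : a * k = m * b := by
    apply Nat.eq_of_mul_eq_mul_left hd
    rw [← mul_assoc, hpa, h, ← hqb]
    ring
  obtain ⟨t, rfl⟩ : a ∣ m :=
    (Nat.coprime_div_gcd_div_gcd hd).dvd_of_dvd_mul_right ⟨k, by rw [hab]⟩
  refine ⟨t, rfl, Nat.eq_of_mul_eq_mul_left ha ?_⟩
  rw [hab]
  ring

section CancelMonoid

variable {α : Type*} [CommMonoidWithZero α] [IsCancelMulZero α]

theorem multiplicity_pow_mul_of_isRelPrime {g r : α} (k : ℕ) (hg : g ≠ 0) (hgu : ¬IsUnit g)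
    (hr : IsRelPrime g r) : multiplicity g (g ^ k * r) = k := by
  refine multiplicity_eq_of_dvd_of_not_dvd (dvd_mul_right _ _) fun hdvd => hgu (hr dvd_rfl ?_)
  rwa [pow_succ, mul_dvd_mul_iff_left (pow_ne_zero k hg)] at hdvd

theorem dvd_of_mul_eq_mul_of_dvd {x y r s : α} (hx : x ≠ 0) (hxy : x ∣ y)
    (h : x * r = y * s) : s ∣ r := by
  obtain ⟨u, rfl⟩ := hxy
  exact ⟨u, by rw [mul_left_cancel₀ hx (h.trans (mul_assoc x u s)), mul_comm]⟩

end CancelMonoid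

section GCDMonoid

variable {α : Type*} [CommMonoidWithZero α] [GCDMonoid α]

theorem associated_gcd_pow_pow (x y : α) (t : ℕ) :
    Associated (gcd (x ^ t) (y ^ t)) (gcd x y ^ t) := by
  obtain ⟨x', y', hx, hy, hu⟩ := extract_gcd x y
  set g := gcd x y
  have hu' : IsUnit (gcd (x' ^ t) (y' ^ t)) :=
    gcd_isUnit_iff_isRelPrime.2 (gcd_isUnit_iff_isRelPrime.1 hu).pow
  rw [hx, hy, mul_pow, mul_pow]
  simpa using (gcd_mul_left' (g ^ t) (x' ^ t) (y' ^ t)).trans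
    ((associated_one_iff_isUnit.2 hu').mul_left _)

theorem associated_lcm_pow_pow {x y : α} (hx : x ≠ 0) (t : ℕ) :
    Associated (lcm (x ^ t) (y ^ t)) (lcm x y ^ t) := by
  have hg : gcd x y ^ t ≠ 0 := pow_ne_zero t fun h => hx ((gcd_eq_zero_iff x y).1 h).1
  have hgt := associated_gcd_pow_pow x y t
  refine Associated.of_mul_left ?_ hgt (hgt.ne_zero_iff.2 hg)
  calc Associated (gcd (x ^ t) (y ^ t) * lcm (x ^ t) (y ^ t)) (x ^ t * y ^ t) :=
        gcd_mul_lcm _ _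
      _ = (x * y) ^ t := (mul_pow x y t).symm
      Associated _ ((gcd x y * lcm x y) ^ t) := (gcd_mul_lcm x y).symm.pow_pow
      _ = gcd x y ^ t * lcm x y ^ t := mul_pow _ _ t

theorem exists_eq_lcm_pow_mul {g₁ g₂ f r₁ r₂ : α} {a b t : ℕ} (hg₁ : g₁ ≠ 0) (hg₂ : g₂ ≠ 0)
    (hr₁ : IsRelPrime g₁ r₁) (hf₁ : f = g₁ ^ (a * t) * r₁)
    (hr₂ : IsRelPrime g₂ r₂) (hf₂ : f = g₂ ^ (b * t) * r₂) :
    ∃ s, IsRelPrime (lcm (g₁ ^ a) (g₂ ^ b)) s ∧ f = lcm (g₁ ^ a) (g₂ ^ b) ^ t * s := by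
  rw [pow_mul] at hf₁ hf₂
  obtain ⟨s, hs⟩ : lcm (g₁ ^ a) (g₂ ^ b) ^ t ∣ f :=
    (associated_lcm_pow_pow (pow_ne_zero a hg₁) t).symm.dvd.trans
      (lcm_dvd ⟨r₁, hf₁⟩ ⟨r₂, hf₂⟩)
  have hs₁ : IsRelPrime g₁ s := hr₁.of_dvd_right <|
    dvd_of_mul_eq_mul_of_dvd (pow_ne_zero _ (pow_ne_zero _ hg₁))
      (pow_dvd_pow_of_dvd (dvd_lcm_left _ _) t) (hf₁.symm.trans hs)
  have hs₂ : IsRelPrime g₂ s := hr₂.of_dvd_right <|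
    dvd_of_mul_eq_mul_of_dvd (pow_ne_zero _ (pow_ne_zero _ hg₂))
      (pow_dvd_pow_of_dvd (dvd_lcm_right _ _) t) (hf₂.symm.trans hs)
  exact ⟨s, (hs₁.pow_left.mul_left hs₂.pow_left).of_dvd_left
    (lcm_dvd (dvd_mul_right _ _) (dvd_mul_left _ _)), hs⟩

end GCDMonoid

section PrimitiveDivisor

variable {F : Type*} [Field F] {n : ℕ} {P : Set (MvPolynomial (Fin n) F)}
  {g h f : MvPolynomial (Fin n) F}

theorem IsPowerDivisorOfAll.eq_pow_multiplicity_mul (hg : IsPowerDivisorOfAll P g) (hg0 : g ≠ 0)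
    (hgu : ¬IsUnit g) (hf : f ∈ P) : ∃ r, IsRelPrime g r ∧ f = g ^ multiplicity g f * r := by
  obtain ⟨k, r, hr, rfl⟩ := hg f hf
  rw [multiplicity_pow_mul_of_isRelPrime k hg0 hgu hr]
  exact ⟨r, hr, rfl⟩

theorem IsPowerDivisorOfAll.isUnit_of_zero (h0 : IsPowerDivisorOfAll P 0)
    (hg : IsPowerDivisorOfAll P g) (hg0 : g ≠ 0) (hgu : ¬IsUnit g) (hf : f ∈ P) :
    IsUnit f := by
  obtain ⟨k, r, hr, rfl⟩ := h0 f hf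
  have hr : IsUnit r := isRelPrime_zero_left.1 hr
  rcases Nat.eq_zero_or_pos k with rfl | hk
  · simpa using hr
  obtain ⟨k', r', hr', hf'⟩ := hg _ hf
  rw [zero_pow hk.ne', zero_mul, eq_comm, mul_eq_zero] at hf'
  rcases hf' with hf' | rfl
  · exact absurd (pow_eq_zero_iff'.1 hf').1 hg0
  · exact absurd (isRelPrime_zero_right.1 hr') hgu

namespace IsPrimitiveDivisor

theorem associated_of_dvd (hg : IsPrimitiveDivisor P g) (hgh : g ∣ h)
    (hh : IsPowerDivisorOfAll P h) : Associated g h :=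
  by_contra fun hna => hg.2 h hgh hna hh

theorem not_isUnit (hg : IsPrimitiveDivisor P g) (hh : IsPowerDivisorOfAll P h)
    (hna : ¬Associated g h) : ¬IsUnit g :=
  fun hu => hna (hg.associated_of_dvd hu.dvd hh)

/-- Otherwise `g ^ 2` would be a power divisor for `P` as well. -/
theorem exists_multiplicity_ne_zero (hg : IsPrimitiveDivisor P g) (hg0 : g ≠ 0)
    (hgu : ¬IsUnit g) : ∃ f ∈ P, multiplicity g f ≠ 0 := by
  by_contra! hzero
  have hsq : IsPowerDivisorOfAll P (g ^ 2) := fun f hf => by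
    obtain ⟨r, hr, hfr⟩ := hg.1.eq_pow_multiplicity_mul hg0 hgu hf
    rw [hzero f hf, pow_zero, one_mul] at hfr
    exact ⟨0, r, hr.pow_left, by rw [pow_zero, one_mul, hfr]⟩
  obtain ⟨u, hu⟩ := hg.associated_of_dvd (dvd_pow_self g two_ne_zero) hsq
  rw [sq] at hu
  exact hgu (mul_left_cancel₀ hg0 hu ▸ u.isUnit)

theorem ne_zero (hg : IsPrimitiveDivisor P g) (hh : IsPrimitiveDivisor P h)
    (hna : ¬Associated g h) : g ≠ 0 := by
  rintro rfl
  have hh0 : h ≠ 0 := by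
    rintro rfl
    exact hna (Associated.refl 0)
  have hhu : ¬IsUnit h := hh.not_isUnit hg.1 fun e => hna e.symm
  obtain ⟨f, hf, hmul⟩ := hh.exists_multiplicity_ne_zero hh0 hhu
  exact hmul (multiplicity_of_isUnit_right hhu (hg.1.isUnit_of_zero hh.1 hh0 hhu hf))

theorem multiplicity_eq (hg : IsPrimitiveDivisor P g) (hh : IsPrimitiveDivisor P h)
    (hna : ¬Associated g h) {k : ℕ} {r : MvPolynomial (Fin n) F} (hr : RelPrime g r)
    (hf : f = g ^ k * r) : multiplicity g f = k :=
  hf ▸ multiplicity_pow_mul_of_isRelPrime k (hg.ne_zero hh hna) (hg.not_isUnit hh.1 hna) hr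

theorem exists_multiplicity_mul_ne (hp₁ : IsPrimitiveDivisor P g) (hp₂ : IsPrimitiveDivisor P h)
    (hna : ¬Associated g h) :
    ∃ f₁ ∈ P, ∃ f₂ ∈ P,
      multiplicity g f₁ * multiplicity h f₂ ≠ multiplicity g f₂ * multiplicity h f₁ := by
  let _ : GCDMonoid (MvPolynomial (Fin n) F) := UniqueFactorizationMonoid.toGCDMonoid _
  have hna' : ¬Associated h g := fun e => hna e.symm
  have hg0 := hp₁.ne_zero hp₂ hna
  have hh0 := hp₂.ne_zero hp₁ hna'
  have hgu := hp₁.not_isUnit hp₂.1 hna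
  have hhu := hp₂.not_isUnit hp₁.1 hna'
  by_contra! hminor
  obtain ⟨f₁, hf₁, hg₁⟩ := hp₁.exists_multiplicity_ne_zero hg0 hgu
  obtain ⟨f₂, hf₂, hh₂⟩ := hp₂.exists_multiplicity_ne_zero hh0 hhu
  have hh₁ : multiplicity h f₁ ≠ 0 := fun e => by
    simpa [e, hg₁, hh₂] using hminor f₁ hf₁ f₂ hf₂
  set d := (multiplicity g f₁).gcd (multiplicity h f₁)
  have hpow : IsPowerDivisorOfAll P (lcm (g ^ (multiplicity g f₁ / d))
      (h ^ (multiplicity h f₁ / d))) := fun f hf => by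
    obtain ⟨t, hgt, hht⟩ := Nat.exists_eq_div_gcd_mul hg₁ (hminor f₁ hf₁ f hf)
    obtain ⟨r₁, hr₁, hfr₁⟩ := hp₁.1.eq_pow_multiplicity_mul hg0 hgu hf
    obtain ⟨r₂, hr₂, hfr₂⟩ := hp₂.1.eq_pow_multiplicity_mul hh0 hhu hf
    rw [hgt] at hfr₁
    rw [hht] at hfr₂
    exact ⟨t, exists_eq_lcm_pow_mul hg0 hh0 hr₁ hfr₁ hr₂ hfr₂⟩
  have hga := hp₁.associated_of_dvd ((dvd_pow_self g
    (Nat.div_gcd_pos_of_pos_left _ (Nat.pos_of_ne_zero hg₁)).ne').trans (dvd_lcm_left _ _)) hpow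
  have hha := hp₂.associated_of_dvd ((dvd_pow_self h
    (Nat.div_gcd_pos_of_pos_right _ (Nat.pos_of_ne_zero hh₁)).ne').trans (dvd_lcm_right _ _)) hpow
  exact hna (hga.trans hha.symm)

end IsPrimitiveDivisor

end PrimitiveDivisor

/-- For two non-associate primitive divisors `h₁, h₂` for `P`, there exist `f₁, f₂ ∈ P`
such that the 2×2 matrix of multiplicities `v_{hᵢ}(fⱼ)` (exponents in the factorizations
`fⱼ = hᵢ ^ v * r` with `r` coprime to `hᵢ`) is invertible over `ℚ`. -/
theorem stmt15 {F : Type*} [Field F] {n : ℕ} (P : Set (MvPolynomial (Fin n) F))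
    (h₁ h₂ : MvPolynomial (Fin n) F)
    (hp1 : IsPrimitiveDivisor P h₁) (hp2 : IsPrimitiveDivisor P h₂)
    (hna : ¬ Associated h₁ h₂) :
    ∃ f₁ ∈ P, ∃ f₂ ∈ P,
      ∀ (v11 v12 v21 v22 : ℕ) (r11 r12 r21 r22 : MvPolynomial (Fin n) F),
        RelPrime h₁ r11 → f₁ = h₁ ^ v11 * r11 →
        RelPrime h₁ r12 → f₂ = h₁ ^ v12 * r12 →
        RelPrime h₂ r21 → f₁ = h₂ ^ v21 * r21 →
        RelPrime h₂ r22 → f₂ = h₂ ^ v22 * r22 →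
        Matrix.det !![(v11 : ℚ), (v12 : ℚ); (v21 : ℚ), (v22 : ℚ)] ≠ 0 := by
  have hna' : ¬Associated h₂ h₁ := fun e => hna e.symm
  obtain ⟨f₁, hf₁, f₂, hf₂, hne⟩ := hp1.exists_multiplicity_mul_ne hp2 hna
  refine ⟨f₁, hf₁, f₂, hf₂, fun v11 v12 v21 v22 r11 r12 r21 r22
    hr11 he11 hr12 he12 hr21 he21 hr22 he22 => ?_⟩
  rw [hp1.multiplicity_eq hp2 hna hr11 he11, hp1.multiplicity_eq hp2 hna hr12 he12,
    hp2.multiplicity_eq hp1 hna' hr21 he21, hp2.multiplicity_eq hp1 hna' hr22 he22] at hne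
  rw [Matrix.det_fin_two_of, sub_ne_zero]
  exact_mod_cast hne
end

section
/- Let P be a class of polynomials, and let φ, ψ be non-associate irreducible polynomials, each dividing some element of P. Then the following are equivalent: (1) φ and ψ divide the same primitive divisor for P; (2) for every f, g ∈ P, the 2×2 matrix with rows (v_φ(f), v_φ(g)) and (v_ψ(f), v_ψ(g)) is singular, where v_φ(f) is the multiplicity of φ as an irreducible factor of f. -/
/-- `a` is the multiplicity of `φ` in the irreducible factorization of `f`. -/
def MultOf {F : Type*} [Field F] {n : ℕ} (φ f : MvPolynomial (Fin n) F) (a : ℕ) : Prop :=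
  φ ^ a ∣ f ∧ ¬ φ ^ (a + 1) ∣ f

open UniqueFactorizationMonoid

theorem exists_pos_forall_dvd_and_mem_closure_range {ι : Type*} (v : ι → ℕ) {i₀ : ι}
    (hi₀ : 0 < v i₀) :
    ∃ δ : ℕ, 0 < δ ∧ (∀ i, δ ∣ v i) ∧
      (δ : ℤ) ∈ AddSubgroup.closure (Set.range fun i => (v i : ℤ)) := by
  obtain ⟨d, hd⟩ := Int.subgroup_cyclic (AddSubgroup.closure (Set.range fun i => (v i : ℤ)))
  have hdvd : ∀ i, d ∣ (v i : ℤ) := by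
    intro i
    have hi : (v i : ℤ) ∈ AddSubgroup.closure {d} := hd ▸ AddSubgroup.subset_closure ⟨i, rfl⟩
    obtain ⟨m, hm⟩ := AddSubgroup.mem_closure_singleton.mp hi
    exact ⟨m, by rw [← hm, smul_eq_mul, mul_comm]⟩
  have hd0 : d ≠ 0 := by
    rintro rfl
    simpa [hi₀.ne'] using hdvd i₀
  refine ⟨d.natAbs, Int.natAbs_pos.mpr hd0,
    fun i => Int.natCast_dvd_natCast.mp (Int.natAbs_dvd.mpr (hdvd i)), ?_⟩
  rw [hd, AddSubgroup.mem_closure_singleton]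
  exact ⟨d.sign, by rw [smul_eq_mul, Int.sign_mul_self]⟩

theorem exists_mul_eq_mul_of_proportional {ι : Type*} {v w : ι → ℕ} {i₀ : ι} (hi₀ : 0 < v i₀)
    (hvw : ∀ i j, v i * w j = v j * w i) {δ : ℕ}
    (hδ : (δ : ℤ) ∈ AddSubgroup.closure (Set.range fun i => (v i : ℤ))) :
    ∃ e : ℕ, ∀ i, δ * w i = e * v i := by
  set c : ℚ := w i₀ / v i₀
  have hc : ∀ i, c * v i = w i := by
    intro i
    have h : (v i₀ * w i : ℚ) = v i * w i₀ := by exact_mod_cast hvw i₀ i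
    rw [div_mul_eq_mul_div, div_eq_iff (by positivity)]
    linarith
  -- multiplication by `c` maps the values of `v`, hence the subgroup they generate, into `ℤ`
  have hcH : ∀ x ∈ AddSubgroup.closure (Set.range fun i => (v i : ℤ)), ∃ m : ℤ, c * x = m := by
    intro x hx
    induction hx using AddSubgroup.closure_induction with
    | mem x hx =>
      obtain ⟨i, rfl⟩ := hx
      exact ⟨w i, by push_cast; exact hc i⟩
    | zero => exact ⟨0, by simp⟩
    | add x y _ _ hx hy =>
      obtain ⟨a, ha⟩ := hx
      obtain ⟨b, hb⟩ := hy
      exact ⟨a + b, by push_cast; rw [mul_add, ha, hb]⟩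
    | neg x _ hx =>
      obtain ⟨a, ha⟩ := hx
      exact ⟨-a, by push_cast; rw [mul_neg, ha]⟩
  obtain ⟨m, hm⟩ := hcH _ hδ
  have hm0 : (0 : ℚ) ≤ m := hm ▸ by positivity
  refine ⟨m.toNat, fun i => ?_⟩
  have h : ((δ : ℤ) : ℚ) * w i = ((m.toNat : ℤ) : ℚ) * v i := by
    rw [Int.toNat_of_nonneg (by exact_mod_cast hm0), ← hm, ← hc i]
    ring
  exact_mod_cast h

theorem dvd_of_isRelPrime_of_dvd_pow_mul {α : Type*} [CommMonoid α] {p g r : α}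
    (hp : ¬IsUnit p) (hpg : p ∣ g) (hgr : IsRelPrime g r) {k : ℕ} (hpf : p ∣ g ^ k * r) :
    g ∣ g ^ k * r := by
  cases k with
  | zero => exact absurd (hgr hpg (by simpa using hpf)) hp
  | succ k => exact (dvd_pow_self g k.succ_ne_zero).mul_right r

section CancelMonoidWithZero

variable {α : Type*} [CommMonoidWithZero α] [IsCancelMulZero α]

theorem emultiplicity_pow_mul_of_isRelPrime {p g r : α} (hp : Prime p) (hpg : p ∣ g)
    (hgr : IsRelPrime g r) (k : ℕ) : emultiplicity p (g ^ k * r) = k * emultiplicity p g := by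
  rw [emultiplicity_mul hp, emultiplicity_pow hp,
    emultiplicity_eq_zero.mpr fun hpr => hp.not_isUnit (hgr hpg hpr), add_zero]

theorem emultiplicity_prod_pow_of_mem {S : Finset α} (hS : ∀ q ∈ S, Prime q)
    (hSdvd : ∀ q ∈ S, ∀ q' ∈ S, q ∣ q' → q = q') (e : α → ℕ) {q : α} (hq : q ∈ S) :
    emultiplicity q (∏ q' ∈ S, q' ^ e q') = e q := by
  rw [Finset.emultiplicity_prod (hS q hq), Finset.sum_eq_single_of_mem q hq fun q' hq' hne =>
    emultiplicity_eq_zero.mpr fun hd => hne (hSdvd q hq q' hq' ((hS q hq).dvd_of_dvd_pow hd)).symm]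
  exact emultiplicity_pow_self_of_prime (hS q hq) (e q)

theorem exists_maximal_of_forall_dvd [WfDvdMonoid α] {T : Set α} {a : α} (ha : a ≠ 0)
    (hT : T.Nonempty) (hTa : ∀ g ∈ T, g ∣ a) :
    ∃ g ∈ T, ∀ g' ∈ T, g ∣ g' → Associated g g' := by
  -- maximising `g` is minimising its cofactor in `a`
  obtain ⟨c, ⟨g, hg, hgc⟩, hmin⟩ := wellFounded_dvdNotUnit.has_min {c | ∃ g ∈ T, a = g * c}
    (by obtain ⟨g, hg⟩ := hT; obtain ⟨c, hc⟩ := hTa g hg; exact ⟨c, g, hg, hc⟩)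
  refine ⟨g, hg, fun g' hg' ⟨u, hu⟩ => ?_⟩
  obtain ⟨c', hc'⟩ := hTa g' hg'
  have hcu : c = c' * u := mul_left_cancel₀ (left_ne_zero_of_mul (hgc ▸ ha))
    (by rw [← hgc, hc', hu, mul_assoc, mul_comm u])
  by_cases hunit : IsUnit u
  · exact hu ▸ associated_mul_unit_right g u hunit
  · exact absurd ⟨right_ne_zero_of_mul (hc' ▸ ha), u, hunit, hcu⟩ (hmin c' ⟨g', hg', hc'⟩)

end CancelMonoidWithZero

section UniqueFactorizationMonoid

variable {α : Type*} [CommMonoidWithZero α] [UniqueFactorizationMonoid α]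

theorem exists_finset_prime_factors {a : α} (ha : a ≠ 0) :
    ∃ S : Finset α, (∀ q ∈ S, Prime q ∧ q ∣ a) ∧ (∀ q ∈ S, ∀ q' ∈ S, q ∣ q' → q = q') ∧
      ∀ p, Prime p → p ∣ a → ∃ q ∈ S, Associated p q := by
  classical
  let _ : StrongNormalizationMonoid α := UniqueFactorizationMonoid.strongNormalizationMonoid
  refine ⟨(normalizedFactors a).toFinset, fun q hq => ?_, fun q hq q' hq' hqq' => ?_,
    fun p hp hpa => ?_⟩
  · rw [Multiset.mem_toFinset] at hq
    exact ⟨prime_of_normalized_factor q hq, dvd_of_mem_normalizedFactors hq⟩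
  · rw [Multiset.mem_toFinset] at hq hq'
    exact ((prime_of_normalized_factor q hq).associated_of_dvd
      (prime_of_normalized_factor q' hq') hqq').eq_of_normalized
      (normalize_normalized_factor q hq) (normalize_normalized_factor q' hq')
  · simpa only [Multiset.mem_toFinset] using
      exists_mem_normalizedFactors_of_dvd ha hp.irreducible hpa

theorem exists_isRelPrime_eq_prod_pow_pow_mul {S : Finset α} (hS : ∀ q ∈ S, Prime q)
    (hSdvd : ∀ q ∈ S, ∀ q' ∈ S, q ∣ q' → q = q') (e : α → ℕ) {f : α} {k : ℕ}
    (hf : ∀ q ∈ S, emultiplicity q f = k * e q) :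
    ∃ r : α, IsRelPrime (∏ q ∈ S, q ^ e q) r ∧ f = (∏ q ∈ S, q ^ e q) ^ k * r := by
  rcases subsingleton_or_nontrivial α with _ | _
  · exact ⟨f, fun _ _ _ => isUnit_of_subsingleton _, Subsingleton.elim _ _⟩
  set g := ∏ q ∈ S, q ^ e q
  have hg0 : g ≠ 0 := Finset.prod_ne_zero_iff.mpr fun q hq => pow_ne_zero _ (hS q hq).ne_zero
  have hgf : ∀ p, Prime p → p ∣ g → emultiplicity p (g ^ k) = emultiplicity p f := by
    intro p hp hpg
    obtain ⟨q, hq, hpq⟩ := hp.exists_mem_finset_dvd hpg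
    have hpq : Associated p q := hp.associated_of_dvd (hS q hq) (hp.dvd_of_dvd_pow hpq)
    rw [← emultiplicity_eq_of_associated_left hpq, ← emultiplicity_eq_of_associated_left hpq,
      emultiplicity_pow (hS q hq), emultiplicity_prod_pow_of_mem hS hSdvd e hq, hf q hq]
  obtain ⟨r, rfl⟩ : g ^ k ∣ f := by
    refine (dvd_iff_emultiplicity_le (pow_ne_zero k hg0)).mpr fun p hp => ?_
    by_cases hpg : p ∣ g
    · exact (hgf p hp hpg).le
    · simp [emultiplicity_pow hp, emultiplicity_eq_zero.mpr hpg]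
  refine ⟨r, (isRelPrime_iff_no_prime_factors hg0).mpr fun p hpg hpr hp => ?_, rfl⟩
  have hfin := finiteMultiplicity_iff_emultiplicity_ne_top.mp
    (FiniteMultiplicity.of_not_isUnit hp.not_isUnit (pow_ne_zero k hg0))
  have hr : emultiplicity p r = 0 := by
    simpa [emultiplicity_mul hp, hfin] using (hgf p hp hpg).symm
  exact emultiplicity_eq_zero.mp hr hpr

theorem exists_common_power_factor_of_proportional {P : Set α} (hP : 0 ∉ P) {φ f₀ : α}
    (hf₀ : f₀ ∈ P) (hφf₀ : φ ∣ f₀) :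
    ∃ g : α, (∀ f ∈ P, ∃ (k : ℕ) (r : α), IsRelPrime g r ∧ f = g ^ k * r) ∧
      ∀ q : α, Prime q → q ∣ f₀ →
        (∀ f ∈ P, ∀ f' ∈ P, multiplicity φ f * multiplicity q f' =
          multiplicity φ f' * multiplicity q f) → q ∣ g := by
  classical
  set C := {q : α | ∀ f ∈ P, ∀ f' ∈ P,
    multiplicity φ f * multiplicity q f' = multiplicity φ f' * multiplicity q f}
  have hvφ : 0 < multiplicity φ f₀ := dvd_iff_multiplicity_pos.mpr hφf₀
  obtain ⟨δ, hδ, hδφ, hδmem⟩ := exists_pos_forall_dvd_and_mem_closure_range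
    (fun f : P => multiplicity φ (f : α)) (i₀ := ⟨f₀, hf₀⟩) hvφ
  choose! e he using fun q (hq : q ∈ C) =>
    exists_mul_eq_mul_of_proportional (v := fun f : P => multiplicity φ (f : α))
      (w := fun f : P => multiplicity q (f : α)) (i₀ := ⟨f₀, hf₀⟩) hvφ
      (fun f f' => hq f f.2 f' f'.2) hδmem
  obtain ⟨S, hS, hSdvd, hSrep⟩ := exists_finset_prime_factors (ne_of_mem_of_not_mem hf₀ hP)
  have hSC : ∀ q ∈ S.filter (· ∈ C), Prime q := fun q hq => (hS q (Finset.mem_filter.mp hq).1).1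
  have hSCdvd : ∀ q ∈ S.filter (· ∈ C), ∀ q' ∈ S.filter (· ∈ C), q ∣ q' → q = q' :=
    fun q hq q' hq' => hSdvd q (Finset.mem_filter.mp hq).1 q' (Finset.mem_filter.mp hq').1
  refine ⟨∏ q ∈ S.filter (· ∈ C), q ^ e q, fun f hf => ?_, fun q hq hqf₀ hqC => ?_⟩
  · obtain ⟨k, hk⟩ := hδφ ⟨f, hf⟩
    refine ⟨k, exists_isRelPrime_eq_prod_pow_pow_mul hSC hSCdvd e fun q hq => ?_⟩
    obtain ⟨hqS, hqC⟩ := Finset.mem_filter.mp hq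
    have hqf : multiplicity q f = e q * k := by
      refine Nat.eq_of_mul_eq_mul_left hδ ?_
      rw [he q hqC ⟨f, hf⟩, hk]
      ring
    rw [(FiniteMultiplicity.of_prime_left (hS q hqS).1
      (ne_of_mem_of_not_mem hf hP)).emultiplicity_eq_multiplicity, hqf]
    push_cast
    ring
  · obtain ⟨q', hq', hqq'⟩ := hSrep q hq hqf₀
    have hq'C : q' ∈ C := by
      simpa only [C, Set.mem_ofPred_eq, multiplicity_eq_of_associated_left hqq'] using hqC
    have heq' : 0 < e q' := by
      refine Nat.pos_of_mul_pos_right (b := multiplicity φ f₀) ?_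
      rw [← he q' hq'C ⟨f₀, hf₀⟩]
      exact Nat.mul_pos hδ (dvd_iff_multiplicity_pos.mpr (hS q' hq').2)
    exact hqq'.dvd.trans ((dvd_pow_self q' heq'.ne').trans
      (Finset.dvd_prod_of_mem _ (Finset.mem_filter.mpr ⟨hq', hq'C⟩)))

end UniqueFactorizationMonoid

section MvPolynomial

variable {F : Type*} [Field F] {n : ℕ} {P : Set (MvPolynomial (Fin n) F)}

theorem multOf_iff_emultiplicity_eq {φ f : MvPolynomial (Fin n) F} {a : ℕ} :
    MultOf φ f a ↔ emultiplicity φ f = a :=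
  emultiplicity_eq_coe.symm

theorem multOf_multiplicity {φ f : MvPolynomial (Fin n) F} (hφ : ¬IsUnit φ) (hf : f ≠ 0) :
    MultOf φ f (multiplicity φ f) :=
  (FiniteMultiplicity.of_not_isUnit hφ hf).multiplicity_eq_iff.mp rfl

theorem multiplicity_mul_multiplicity_eq_of_det_eq_zero {φ ψ f f' : MvPolynomial (Fin n) F}
    (hφ : ¬IsUnit φ) (hψ : ¬IsUnit ψ) (hf : f ≠ 0) (hf' : f' ≠ 0)
    (H : ∀ a b c d : ℕ, MultOf φ f a → MultOf φ f' b → MultOf ψ f c → MultOf ψ f' d →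
      Matrix.det !![(a : ℚ), (b : ℚ); (c : ℚ), (d : ℚ)] = 0) :
    multiplicity φ f * multiplicity ψ f' = multiplicity φ f' * multiplicity ψ f := by
  have h := H _ _ _ _ (multOf_multiplicity hφ hf) (multOf_multiplicity hφ hf')
    (multOf_multiplicity hψ hf) (multOf_multiplicity hψ hf')
  rw [Matrix.det_fin_two_of, sub_eq_zero] at h
  exact_mod_cast h

theorem IsPowerDivisorOfAll.emultiplicity_mul_emultiplicity_eq
    {g p q f f' : MvPolynomial (Fin n) F} (hg : IsPowerDivisorOfAll P g) (hp : Prime p)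
    (hq : Prime q) (hpg : p ∣ g) (hqg : q ∣ g) (hf : f ∈ P) (hf' : f' ∈ P) :
    emultiplicity p f * emultiplicity q f' = emultiplicity p f' * emultiplicity q f := by
  obtain ⟨k, r, hr, rfl⟩ := hg f hf
  obtain ⟨k', r', hr', rfl⟩ := hg f' hf'
  simp only [emultiplicity_pow_mul_of_isRelPrime hp hpg hr,
    emultiplicity_pow_mul_of_isRelPrime hp hpg hr', emultiplicity_pow_mul_of_isRelPrime hq hqg hr,
    emultiplicity_pow_mul_of_isRelPrime hq hqg hr']
  ring

theorem IsPowerDivisorOfAll.exists_isPrimitiveDivisor_dvd {g p f₀ : MvPolynomial (Fin n) F}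
    (hg : IsPowerDivisorOfAll P g) (hp : ¬IsUnit p) (hpg : p ∣ g) (hf₀ : f₀ ∈ P)
    (hf₀0 : f₀ ≠ 0) (hpf₀ : p ∣ f₀) :
    ∃ g' : MvPolynomial (Fin n) F, IsPrimitiveDivisor P g' ∧ g ∣ g' := by
  obtain ⟨g', ⟨hg', hgg'⟩, hmax⟩ := exists_maximal_of_forall_dvd
    (T := {h | IsPowerDivisorOfAll P h ∧ g ∣ h}) hf₀0 ⟨g, hg, dvd_rfl⟩ fun h ⟨hh, hgh⟩ => by
      obtain ⟨k, r, hr, rfl⟩ := hh f₀ hf₀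
      exact dvd_of_isRelPrime_of_dvd_pow_mul hp (hpg.trans hgh) hr hpf₀
  exact ⟨g', ⟨hg', fun h hg'h hna hh => hna (hmax h ⟨hh, hgg'.trans hg'h⟩ hg'h)⟩, hgg'⟩

end MvPolynomial

theorem stmt16_general {F : Type*} [Field F] {n : ℕ} (P : Set (MvPolynomial (Fin n) F))
    (h0 : (0 : MvPolynomial (Fin n) F) ∉ P)
    (φ ψ : MvPolynomial (Fin n) F)
    (hφ : Irreducible φ) (hψ : Irreducible ψ)
    (hφdvd : ∃ f ∈ P, φ ∣ f) (hψdvd : ∃ f ∈ P, ψ ∣ f) :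
    (∃ g : MvPolynomial (Fin n) F, IsPrimitiveDivisor P g ∧ φ ∣ g ∧ ψ ∣ g) ↔
      (∀ f ∈ P, ∀ g ∈ P, ∀ a b c d : ℕ,
        MultOf φ f a → MultOf φ g b → MultOf ψ f c → MultOf ψ g d →
        Matrix.det !![(a : ℚ), (b : ℚ); (c : ℚ), (d : ℚ)] = 0) := by
  have hne : ∀ f ∈ P, f ≠ 0 := fun f hf => ne_of_mem_of_not_mem hf h0
  constructor
  · rintro ⟨g, hg, hφg, hψg⟩ f hf f' hf' a b c d ha hb hc hd
    have h := hg.1.emultiplicity_mul_emultiplicity_eq hφ.prime hψ.prime hφg hψg hf hf'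
    rw [multOf_iff_emultiplicity_eq] at ha hb hc hd
    rw [ha, hb, hc, hd] at h
    rw [Matrix.det_fin_two_of, sub_eq_zero]
    exact_mod_cast h
  · intro H
    obtain ⟨f₀, hf₀, hφf₀⟩ := hφdvd
    obtain ⟨f₁, hf₁, hψf₁⟩ := hψdvd
    have hprop : ∀ f ∈ P, ∀ f' ∈ P,
        multiplicity φ f * multiplicity ψ f' = multiplicity φ f' * multiplicity ψ f :=
      fun f hf f' hf' => multiplicity_mul_multiplicity_eq_of_det_eq_zero hφ.not_isUnit
        hψ.not_isUnit (hne f hf) (hne f' hf') (H f hf f' hf')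
    have hψf₀ : ψ ∣ f₀ := by
      refine dvd_of_multiplicity_pos (Nat.pos_of_mul_pos_left (a := multiplicity φ f₁) ?_)
      rw [← hprop f₀ hf₀ f₁ hf₁]
      exact Nat.mul_pos (dvd_iff_multiplicity_pos.mpr hφf₀) (dvd_iff_multiplicity_pos.mpr hψf₁)
    obtain ⟨h, hh, hdvd⟩ := exists_common_power_factor_of_proportional h0 hf₀ hφf₀
    have hφh := hdvd φ hφ.prime hφf₀ fun _ _ _ _ => mul_comm _ _
    obtain ⟨g, hg, hhg⟩ :=
      IsPowerDivisorOfAll.exists_isPrimitiveDivisor_dvd hh hφ.not_isUnit hφh hf₀ (hne f₀ hf₀) hφf₀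
    exact ⟨g, hg, hφh.trans hhg, (hdvd ψ hψ.prime hψf₀ hprop).trans hhg⟩

/-- Let `φ, ψ` be non-associate irreducible polynomials, each dividing some element of a
class `P` of nonzero polynomials.  Then `φ` and `ψ` divide the same primitive divisor for
`P` iff for every `f, g ∈ P` the 2×2 matrix of multiplicities of `φ` and `ψ` in `f` and
`g` is singular. -/
theorem stmt16 {F : Type*} [Field F] {n : ℕ} (P : Set (MvPolynomial (Fin n) F))
    (h0 : (0 : MvPolynomial (Fin n) F) ∉ P)
    (φ ψ : MvPolynomial (Fin n) F)
    (hφ : Irreducible φ) (hψ : Irreducible ψ) (hna : ¬ Associated φ ψ)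
    (hφdvd : ∃ f ∈ P, φ ∣ f) (hψdvd : ∃ f ∈ P, ψ ∣ f) :
    (∃ g : MvPolynomial (Fin n) F, IsPrimitiveDivisor P g ∧ φ ∣ g ∧ ψ ∣ g) ↔
      (∀ f ∈ P, ∀ g ∈ P, ∀ a b c d : ℕ,
        MultOf φ f a → MultOf φ g b → MultOf ψ f c → MultOf ψ g d →
        Matrix.det !![(a : ℚ), (b : ℚ); (c : ℚ), (d : ℚ)] = 0) :=
  stmt16_general P h0 φ ψ hφ hψ hφdvd hψdvd
end

section
/- Let f = ∏_j h_j^{e_j} be a factorization of a polynomial, and suppose each h_j is mapped by a substitution to a polynomial H_j, with F = ∏_j H_j^{e_j} having irreducible factorization ∏_k t_k^{r_k}. Then ∑_k deg(t_k)(r_k − 1) ≥ ∑_j deg(H_j)(e_j − 1), with equality if and only if the polynomials H_j are squarefree and pairwise coprime. -/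
/-!
Write `f = ∏ₖ tₖ^{rₖ}`, associated to `∏ⱼ Hⱼ^{eⱼ}`, with radical `P = ∏ₖ tₖ`, and
`G = ∏ⱼ Hⱼ`. Since all exponents are at least `1`, the two defects are `deg f - deg P` and
`deg f - deg G`, so the claim is that `deg P ≤ deg G` with equality iff `G` is squarefree.
Every `tₖ` is a prime dividing a power of `G`, hence `P ∣ G`; equality of degrees then means
`G ∣ P`, which holds iff `G` is squarefree, because a squarefree divisor of `f` divides its
radical and divisors of `P` are squarefree.
-/

open Polynomial Finset Function

theorem Finset.prod_dvd_prod_pow {M ι : Type*} [CommMonoid M] {s : Finset ι} (f : ι → M)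
    {n : ι → ℕ} (hn : ∀ i ∈ s, 1 ≤ n i) : ∏ i ∈ s, f i ∣ ∏ i ∈ s, f i ^ n i :=
  prod_dvd_prod_of_dvd _ _ fun i hi => dvd_pow_self _ (by have := hn i hi; omega)

theorem Finset.prod_pow_dvd_pow_sum {M ι : Type*} [CommMonoid M] (s : Finset ι) (f : ι → M)
    (n : ι → ℕ) : ∏ i ∈ s, f i ^ n i ∣ (∏ i ∈ s, f i) ^ ∑ i ∈ s, n i := by
  rw [← prod_pow]
  exact prod_dvd_prod_of_dvd _ _ fun i hi => pow_dvd_pow _ (single_le_sum (by simp) hi)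

theorem Finset.squarefree_prod_iff {R ι : Type*} [CommMonoidWithZero R] [IsCancelMulZero R]
    [DecompositionMonoid R] {s : Finset ι} {f : ι → R} :
    Squarefree (∏ i ∈ s, f i) ↔
      (∀ i ∈ s, Squarefree (f i)) ∧ (s : Set ι).Pairwise (IsRelPrime on f) := by
  classical
  refine ⟨fun h => ⟨fun i hi => h.squarefree_of_dvd (dvd_prod_of_mem f hi), ?_⟩,
    fun h => squarefree_prod_of_pairwise_isCoprime h.2 h.1⟩
  intro i hi j hj hij
  have hdvd : f i * f j ∣ ∏ i ∈ s, f i := by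
    rw [← prod_pair hij]
    exact prod_dvd_prod_of_subset _ _ _ (insert_subset hi (singleton_subset_iff.2 hj))
  exact (squarefree_mul_iff.1 (h.squarefree_of_dvd hdvd)).1

theorem Squarefree.dvd_prod_of_dvd_prod_pow {R ι : Type*} [CommMonoidWithZero R]
    [DecompositionMonoid R] {x : R} (hx : Squarefree x) {s : Finset ι} {f : ι → R}
    {n : ι → ℕ} (h : x ∣ ∏ i ∈ s, f i ^ n i) : x ∣ ∏ i ∈ s, f i :=
  hx.isRadical _ _ (h.trans (prod_pow_dvd_pow_sum s f n))

section Irreducibles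

variable {R κ : Type*} [CommMonoidWithZero R] {u : Finset κ} {t : κ → R}

theorem pairwise_isRelPrime_of_not_associated (ht : ∀ k ∈ u, Irreducible (t k))
    (htt : ∀ k ∈ u, ∀ k' ∈ u, k ≠ k' → ¬ Associated (t k) (t k')) :
    (u : Set κ).Pairwise (IsRelPrime on t) := fun k hk k' hk' hne =>
  (ht k hk).isRelPrime_iff_not_dvd.2 fun h => htt k hk k' hk' hne ((ht k hk).associated_of_dvd
    (ht k' hk') h)

theorem squarefree_prod_of_not_associated [IsCancelMulZero R] [DecompositionMonoid R]
    (ht : ∀ k ∈ u, Irreducible (t k))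
    (htt : ∀ k ∈ u, ∀ k' ∈ u, k ≠ k' → ¬ Associated (t k) (t k')) :
    Squarefree (∏ k ∈ u, t k) :=
  squarefree_prod_of_pairwise_isCoprime (pairwise_isRelPrime_of_not_associated ht htt)
    fun k hk => (ht k hk).squarefree

theorem prod_dvd_of_prod_pow_dvd_pow [DecompositionMonoid R] {r : κ → ℕ}
    (hr : ∀ k ∈ u, 1 ≤ r k) (ht : ∀ k ∈ u, Irreducible (t k))
    (htt : ∀ k ∈ u, ∀ k' ∈ u, k ≠ k' → ¬ Associated (t k) (t k')) {x : R} {n : ℕ}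
    (h : ∏ k ∈ u, t k ^ r k ∣ x ^ n) : ∏ k ∈ u, t k ∣ x :=
  prod_dvd_of_isRelPrime (pairwise_isRelPrime_of_not_associated ht htt) fun k hk =>
    (ht k hk).prime.dvd_of_dvd_pow
      (((dvd_prod_of_mem t hk).trans (prod_dvd_prod_pow t hr)).trans h)

end Irreducibles

theorem Polynomial.sum_natDegree_mul_pred_add_natDegree_prod {R ι : Type*} [CommSemiring R]
    [NoZeroDivisors R] {s : Finset ι} {f : ι → R[X]} {n : ι → ℕ} (hf : ∀ i ∈ s, f i ≠ 0)
    (hn : ∀ i ∈ s, 1 ≤ n i) :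
    ∑ i ∈ s, (f i).natDegree * (n i - 1) + (∏ i ∈ s, f i).natDegree =
      (∏ i ∈ s, f i ^ n i).natDegree := by
  rw [natDegree_prod _ _ hf, natDegree_prod _ _ fun i hi => pow_ne_zero _ (hf i hi),
    ← sum_add_distrib]
  refine sum_congr rfl fun i hi => ?_
  obtain ⟨m, hm⟩ := Nat.exists_eq_add_of_le' (hn i hi)
  rw [natDegree_pow, hm, Nat.add_sub_cancel]
  ring

/-- Let `∏ⱼ Hⱼ^{eⱼ}` be a product of univariate polynomials with `eⱼ ≥ 1`, and let
`∏ₖ tₖ^{rₖ}` be its irreducible factorization (the `tₖ` pairwise non-associate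
irreducibles with `rₖ ≥ 1`).  Then
`∑ₖ deg(tₖ)(rₖ − 1) ≥ ∑ⱼ deg(Hⱼ)(eⱼ − 1)`, with equality iff the `Hⱼ` are
squarefree and pairwise coprime. -/
theorem stmt18 {F : Type*} [Field F] {ι κ : Type*} (s : Finset ι) (u : Finset κ)
    (H : ι → Polynomial F) (e : ι → ℕ) (t : κ → Polynomial F) (r : κ → ℕ)
    (he : ∀ j ∈ s, 1 ≤ e j) (hr : ∀ k ∈ u, 1 ≤ r k)
    (ht : ∀ k ∈ u, Irreducible (t k))
    (htt : ∀ k ∈ u, ∀ k' ∈ u, k ≠ k' → ¬ Associated (t k) (t k'))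
    (hprod : Associated (∏ k ∈ u, t k ^ r k) (∏ j ∈ s, H j ^ e j)) :
    (∑ j ∈ s, (H j).natDegree * (e j - 1)) ≤ (∑ k ∈ u, (t k).natDegree * (r k - 1)) ∧
    ((∑ k ∈ u, (t k).natDegree * (r k - 1)) = (∑ j ∈ s, (H j).natDegree * (e j - 1)) ↔
      (∀ j ∈ s, Squarefree (H j)) ∧
      (∀ j ∈ s, ∀ j' ∈ s, j ≠ j' → IsCoprime (H j) (H j'))) := by
  have hP0 : ∏ k ∈ u, t k ≠ 0 := prod_ne_zero_iff.2 fun k hk => (ht k hk).ne_zero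
  have hH0 : ∀ j ∈ s, H j ≠ 0 := fun j hj h0 =>
    (prod_ne_zero_iff.2 fun k hk => pow_ne_zero _ (ht k hk).ne_zero) <| hprod.eq_zero_iff.2 <|
      prod_eq_zero hj (by rw [h0, zero_pow (by have := he j hj; omega)])
  have hG0 : ∏ j ∈ s, H j ≠ 0 := prod_ne_zero_iff.2 hH0
  have hdegt := sum_natDegree_mul_pred_add_natDegree_prod (fun k hk => (ht k hk).ne_zero) hr
  have hdegH := sum_natDegree_mul_pred_add_natDegree_prod hH0 he
  have hdeg := natDegree_eq_of_degree_eq (degree_eq_degree_of_associated hprod)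
  have hPG : ∏ k ∈ u, t k ∣ ∏ j ∈ s, H j :=
    prod_dvd_of_prod_pow_dvd_pow hr ht htt (hprod.dvd.trans (prod_pow_dvd_pow_sum s H e))
  have hle := natDegree_le_of_dvd hPG hG0
  refine ⟨by omega, ?_⟩
  calc _ ↔ (∏ j ∈ s, H j).natDegree ≤ (∏ k ∈ u, t k).natDegree := by omega
    _ ↔ ∏ j ∈ s, H j ∣ ∏ k ∈ u, t k :=
      ⟨fun h => (associated_of_dvd_of_natDegree_le hPG hG0 h).symm.dvd,
        fun h => natDegree_le_of_dvd h hP0⟩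
    _ ↔ Squarefree (∏ j ∈ s, H j) :=
      ⟨fun h => (squarefree_prod_of_not_associated ht htt).squarefree_of_dvd h,
        fun h => h.dvd_prod_of_dvd_prod_pow ((prod_dvd_prod_pow H he).trans hprod.symm.dvd)⟩
    _ ↔ _ := by
      simp only [squarefree_prod_iff, Set.Pairwise, mem_coe, onFun, isRelPrime_iff_isCoprime]
end
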